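/- arXiv:2202.00704 — 10 statements merged into one kernel-verified Lean document; each statement's English description precedes it below -/
import Mathlib

section
/- The sequence λ ↦ |{F(n) mod 2^λ : n ≥ 0}| / 2^λ converges, as λ → ∞, to 21/32. That is, the limiting density of residues attained by the Fibonacci sequence modulo powers of 2 equals 21/32. -/
/-!
Modulo 32 the Fibonacci sequence has period 48 and takes 21 values: the 16 odd residues and
0, 2, 8, 16, 24. For λ ≥ 5 a residue modulo 2^λ is a Fibonacci value exactly when its reduction
modulo 32 is one, so there are 21 · 2^(λ-5) of them.

Solutions are lifted one bit at a time. Since F(3·2^(n-1)) ≡ 0 and F(3·2^(n-1) + 1) ≡ 1 + 2^n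
modulo 2^(n+1), shifting the index by 3·2^(n-1) flips bit n of an odd F(m) and keeps the parity
of m; hence every odd residue is F(m) with m even, and every residue ≡ 1 (mod 4) is F(m) with m
odd. Even values come from F(3m) = 5F(m)³ + 3(-1)^m F(m): by the same bit flipping, 5y³ + 3y on
odd y reaches every multiple of 8, and 5y³ - 3y on y ≡ 1 (mod 4) every residue ≡ 2 (mod 32).
-/

open Nat Function

theorem AddMonoidHom.card_preimage_eq_mul_card_ker {G H : Type*} [AddGroup G] [AddGroup H]
    [Finite G] {f : G →+ H} (hf : Surjective f) (s : Set H) :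
    Nat.card (f ⁻¹' s) = Nat.card s * Nat.card f.ker := by
  have : Finite H := Finite.of_surjective f hf
  obtain ⟨s, rfl⟩ := s.toFinite.exists_finset_coe
  have hfiber (b : H) : Nat.card {a // f a = b} = Nat.card f.ker :=
    Nat.card_congr (f.fiberEquivKerOfSurjective hf b)
  rw [Finset.card_preimage_eq_sum_card_image_eq fun _ _ => Set.toFinite _]
  simp [hfiber]

theorem Int.exists_modEq_two_pow_of_shift {α : Type*} (f : α → ℤ) (p : α → Prop) {N : ℕ}
    {z : ℤ} (shift : ∀ n ≥ N, ∀ a, p a → ∃ b, p b ∧ f b ≡ f a + 2 ^ n [ZMOD 2 ^ (n + 1)])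
    (base : ∃ a, p a ∧ f a ≡ z [ZMOD 2 ^ N]) {n : ℕ} (hn : N ≤ n) :
    ∃ a, p a ∧ f a ≡ z [ZMOD 2 ^ n] := by
  induction n, hn using Nat.le_induction with
  | base => exact base
  | succ n hn ih =>
    obtain ⟨a, ha, hfa⟩ := ih
    obtain ⟨d, hd⟩ := hfa.dvd
    rcases Int.even_or_odd' d with ⟨e, rfl | rfl⟩
    · exact ⟨a, ha, Int.modEq_iff_dvd.2 ⟨e, by linear_combination hd⟩⟩
    · obtain ⟨b, hb, hfb⟩ := shift n hn a ha
      exact ⟨b, hb, hfb.trans (Int.modEq_iff_dvd.2 ⟨e, by linear_combination hd⟩)⟩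

theorem fib_add_modEq_mul_fib {p : ℕ} {q c : ℤ} (h₀ : (fib p : ℤ) ≡ 0 [ZMOD q])
    (h₁ : (fib (p + 1) : ℤ) ≡ c [ZMOD q]) (m : ℕ) :
    (fib (m + p) : ℤ) ≡ c * fib m [ZMOD q] := by
  cases m with
  | zero => simpa using h₀
  | succ m =>
    rw [add_right_comm, add_comm m p, fib_add]
    push_cast
    simpa using (h₀.mul_right (fib m : ℤ)).add (h₁.mul_right (fib (m + 1) : ℤ))

theorem natCast_fib_two_mul (p : ℕ) :
    (fib (2 * p) : ℤ) = fib p * (2 * fib (p + 1) - fib p) := by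
  have h₁ : (fib (2 * p + 2) : ℤ) = fib (2 * p) + fib (2 * p + 1) := by exact_mod_cast fib_add_two
  have h₂ : (fib (2 * p + 1) : ℤ) = fib (p + 1) ^ 2 + fib p ^ 2 := by
    exact_mod_cast fib_two_mul_add_one p
  have h₃ : (fib (2 * p + 2) : ℤ) = fib (p + 1) * (2 * fib p + fib (p + 1)) := by
    exact_mod_cast fib_two_mul_add_two p
  linear_combination h₃ - h₁ - h₂

theorem natCast_fib_three_mul (m : ℕ) :
    (fib (3 * m) : ℤ) = 5 * fib m ^ 3 + 3 * (-1) ^ m * fib m := by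
  have h₁ := Int.fib_add (2 * m) m
  have h₂ := Int.fib_two_mul m
  have h₃ := Int.fib_add_two (2 * m - 1)
  have h₄ := Int.fib_two_mul_add_one m
  have h₅ := Int.fib_succ_mul_fib_pred_sub_fib_sq m
  have h₆ := Int.fib_add_two ((m : ℤ) - 1)
  have h₇ : Int.fib (m + 1) = fib (m + 1) := by exact_mod_cast Int.fib_natCast (m + 1)
  rw [show (2 * m + m : ℤ) = (3 * m : ℕ) by push_cast; ring] at h₁
  rw [show (2 * m - 1 + 2 : ℤ) = 2 * m + 1 by ring, sub_add_cancel] at h₃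
  rw [sub_add_cancel, show (m - 1 + 2 : ℤ) = m + 1 by ring] at h₆
  simp only [Int.fib_natCast, Int.natAbs_natCast, h₇] at *
  linear_combination h₁ - fib m * h₃ + fib m * h₄ + (fib (m + 1) - fib m : ℤ) * h₂
    + 3 * fib m * h₅ + 3 * fib m * fib (m + 1) * h₆

theorem fib_three_mul_two_pow_modEq (j : ℕ) :
    (fib (3 * 2 ^ (j + 1)) : ℤ) ≡ 0 [ZMOD 2 ^ (j + 3)] ∧
      (fib (3 * 2 ^ (j + 1) + 1) : ℤ) ≡ 1 + 2 ^ (j + 2) [ZMOD 2 ^ (j + 3)] := by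
  induction j with
  | zero => decide
  | succ j ih =>
    rw [show 3 * 2 ^ (j + 1 + 1) = 2 * (3 * 2 ^ (j + 1)) by ring]
    set p := 3 * 2 ^ (j + 1)
    obtain ⟨α, hα⟩ := Int.modEq_zero_iff_dvd.1 ih.1
    obtain ⟨t, ht⟩ := ih.2.symm.dvd
    have hb : (fib (p + 1) : ℤ) = 1 + 2 ^ (j + 2) + 2 ^ (j + 3) * t := by linear_combination ht
    have h₃ : (fib (2 * p + 1) : ℤ) = fib (p + 1) ^ 2 + fib p ^ 2 := by
      exact_mod_cast fib_two_mul_add_one p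
    constructor
    · refine Int.modEq_zero_iff_dvd.2 ⟨α * (fib (p + 1) - 2 ^ (j + 2) * α), ?_⟩
      rw [natCast_fib_two_mul, hα]; ring
    · refine (Int.modEq_iff_dvd.2 ⟨t + 2 ^ j * (1 + 2 * t) ^ 2 + 2 ^ (j + 2) * α ^ 2, ?_⟩).symm
      rw [h₃, hb, hα]; ring

theorem fib_add_three_mul_two_pow_modEq {j m : ℕ} (hm : Odd (fib m : ℤ)) :
    (fib (m + 3 * 2 ^ (j + 1)) : ℤ) ≡ fib m + 2 ^ (j + 2) [ZMOD 2 ^ (j + 3)] := by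
  obtain ⟨h₀, h₁⟩ := fib_three_mul_two_pow_modEq j
  obtain ⟨u, hu⟩ := hm
  refine (fib_add_modEq_mul_fib h₀ h₁ m).trans (Int.modEq_iff_dvd.2 ⟨-u, ?_⟩)
  rw [hu]; ring

theorem exists_fib_modEq_two_pow_of_modEq_four {i : ℕ} {z : ℤ} (hz : Odd z)
    (base : ∃ m, m % 2 = i ∧ (fib m : ℤ) ≡ z [ZMOD 4]) {n : ℕ} (hn : 2 ≤ n) :
    ∃ m, m % 2 = i ∧ (fib m : ℤ) ≡ z [ZMOD 2 ^ n] := by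
  obtain ⟨m, hm, hmz⟩ := base
  have hodd : Odd (fib m : ℤ) := by
    have := hmz.of_dvd (by norm_num : (2 : ℤ) ∣ 4)
    rw [Int.odd_iff] at hz ⊢; unfold Int.ModEq at this; omega
  have shift : ∀ n ≥ 2, ∀ m, m % 2 = i ∧ Odd (fib m : ℤ) →
      ∃ m', (m' % 2 = i ∧ Odd (fib m' : ℤ)) ∧ (fib m' : ℤ) ≡ fib m + 2 ^ n [ZMOD 2 ^ (n + 1)] := by
    rintro n hn m ⟨hm, hodd⟩
    obtain ⟨j, rfl⟩ := Nat.exists_eq_add_of_le' hn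
    have hshift := fib_add_three_mul_two_pow_modEq (j := j) hodd
    refine ⟨m + 3 * 2 ^ (j + 1), ⟨by rw [pow_succ]; omega, ?_⟩, hshift⟩
    have := hshift.of_dvd (dvd_pow_self 2 (by omega : j + 3 ≠ 0))
    rw [Int.odd_iff] at hodd ⊢
    rw [show (2 : ℤ) ^ (j + 2) = 2 * 2 ^ (j + 1) by ring] at this
    unfold Int.ModEq at this
    omega
  obtain ⟨m, ⟨hm, -⟩, hmz⟩ := Int.exists_modEq_two_pow_of_shift (fun m => (fib m : ℤ))
    (fun m => m % 2 = i ∧ Odd (fib m : ℤ)) shift ⟨m, ⟨hm, hodd⟩, hmz⟩ hn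
  exact ⟨m, hm, hmz⟩

theorem exists_even_fib_modEq_two_pow {z : ℤ} (hz : Odd z) {n : ℕ} (hn : 2 ≤ n) :
    ∃ m, Even m ∧ (fib m : ℤ) ≡ z [ZMOD 2 ^ n] := by
  have base : ∃ m, m % 2 = 0 ∧ (fib m : ℤ) ≡ z [ZMOD 4] := by
    rw [Int.odd_iff] at hz
    rcases (by omega : z % 4 = 1 ∨ z % 4 = 3) with h | h
    · exact ⟨2, rfl, h.symm⟩
    · exact ⟨4, rfl, h.symm⟩
  simpa [Nat.even_iff] using exists_fib_modEq_two_pow_of_modEq_four hz base hn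

theorem exists_odd_fib_modEq_two_pow {z : ℤ} (hz : z ≡ 1 [ZMOD 4]) {n : ℕ} (hn : 2 ≤ n) :
    ∃ m, Odd m ∧ (fib m : ℤ) ≡ z [ZMOD 2 ^ n] := by
  have hodd : Odd z := by rw [Int.odd_iff]; unfold Int.ModEq at hz; omega
  simpa [Nat.odd_iff] using exists_fib_modEq_two_pow_of_modEq_four hodd ⟨1, rfl, hz.symm⟩ hn

theorem exists_odd_cubic_add_modEq_two_pow {z : ℤ} (hz : 8 ∣ z) {n : ℕ} (hn : 3 ≤ n) :
    ∃ y : ℤ, Odd y ∧ 5 * y ^ 3 + 3 * y ≡ z [ZMOD 2 ^ n] := by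
  refine Int.exists_modEq_two_pow_of_shift (fun y => 5 * y ^ 3 + 3 * y) Odd ?_
    ⟨1, odd_one, (Int.modEq_iff_dvd.2 (by simpa using hz))⟩ hn
  rintro n hn y ⟨u, rfl⟩
  obtain ⟨j, rfl⟩ := Nat.exists_eq_add_of_le' hn
  -- With d = 2^(j+2) the increment is d(15y² + 3) + 15yd² + 5d³, and 15y² + 3 ≡ 2 (mod 4).
  refine ⟨2 * u + 1 + 2 ^ (j + 2), ⟨u + 2 ^ (j + 1), by ring⟩, Int.modEq_iff_dvd.2
    ⟨-(15 * u ^ 2 + 15 * u + 4 + 15 * (2 * u + 1) * 2 ^ j + 5 * 2 ^ (2 * j + 2)), by ring⟩⟩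

theorem exists_cubic_sub_modEq_two_pow {z : ℤ} (hz : z ≡ 2 [ZMOD 32]) {n : ℕ} (hn : 5 ≤ n) :
    ∃ y : ℤ, y ≡ 1 [ZMOD 4] ∧ 5 * y ^ 3 - 3 * y ≡ z [ZMOD 2 ^ n] := by
  refine Int.exists_modEq_two_pow_of_shift (fun y => 5 * y ^ 3 - 3 * y) (· ≡ 1 [ZMOD 4]) ?_
    ⟨1, rfl, hz.symm⟩ hn
  intro n hn y hy
  obtain ⟨j, rfl⟩ := Nat.exists_eq_add_of_le' hn
  obtain ⟨u, hu⟩ := hy.symm.dvd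
  obtain rfl : y = 4 * u + 1 := by linear_combination hu
  -- With d = 2^(j+3) the increment is d(15y² - 3) + 15yd² + 5d³, and 15y² - 3 ≡ 4 (mod 8).
  refine ⟨4 * u + 1 + 2 ^ (j + 3), Int.modEq_iff_dvd.2 ⟨-(u + 2 ^ (j + 1)), by ring⟩,
    Int.modEq_iff_dvd.2
    ⟨-(30 * u ^ 2 + 15 * u + 1 + 15 * (4 * u + 1) * 2 ^ j + 5 * 2 ^ (2 * j + 3)), by ring⟩⟩

theorem exists_fib_modEq_two_pow_of_eight_dvd {z : ℤ} (hz : 8 ∣ z) {n : ℕ} (hn : 3 ≤ n) :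
    ∃ m, (fib m : ℤ) ≡ z [ZMOD 2 ^ n] := by
  obtain ⟨y, hy, hyz⟩ := exists_odd_cubic_add_modEq_two_pow hz hn
  obtain ⟨m, hm, hmy⟩ := exists_even_fib_modEq_two_pow hy (by omega : 2 ≤ n)
  have hfib : (fib (3 * m) : ℤ) = 5 * fib m ^ 3 + 3 * fib m := by
    rw [natCast_fib_three_mul, hm.neg_one_pow]; ring
  exact ⟨3 * m, hfib ▸ (((hmy.pow 3).mul_left 5).add (hmy.mul_left 3)).trans hyz⟩

theorem exists_fib_modEq_two_pow_of_modEq_two {z : ℤ} (hz : z ≡ 2 [ZMOD 32]) {n : ℕ}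
    (hn : 5 ≤ n) : ∃ m, (fib m : ℤ) ≡ z [ZMOD 2 ^ n] := by
  obtain ⟨y, hy, hyz⟩ := exists_cubic_sub_modEq_two_pow hz hn
  obtain ⟨m, hm, hmy⟩ := exists_odd_fib_modEq_two_pow hy (by omega : 2 ≤ n)
  have hfib : (fib (3 * m) : ℤ) = 5 * fib m ^ 3 - 3 * fib m := by
    rw [natCast_fib_three_mul, hm.neg_one_pow]; ring
  exact ⟨3 * m, hfib ▸ (((hmy.pow 3).mul_left 5).sub (hmy.mul_left 3)).trans hyz⟩

theorem periodic_fib_zmod_32 : Periodic (fun n => (fib n : ZMod 32)) 48 := fun n => by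
  have h := fib_add_modEq_mul_fib (p := 48) (q := 32) (c := 1) (by decide) (by decide) n
  simpa using (ZMod.intCast_eq_intCast_iff' _ _ 32).2 h

theorem card_range_fib_zmod_32 : Nat.card (Set.range fun n => (fib n : ZMod 32)) = 21 := by
  have hrange : Set.range (fun n => (fib n : ZMod 32)) =
      (Finset.range 48).image (fun n => (fib n : ZMod 32)) := by
    ext x
    simp only [Set.mem_range, Finset.coe_image, Finset.coe_range, Set.mem_image, Set.mem_Iio]
    constructor
    · rintro ⟨n, rfl⟩
      exact ⟨n % 48, Nat.mod_lt n (by norm_num), periodic_fib_zmod_32.map_mod_nat n⟩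
    · rintro ⟨n, -, rfl⟩
      exact ⟨n, rfl⟩
  rw [hrange, Nat.card_coe_set_eq, Set.ncard_coe_finset]
  decide

theorem fib_mod_32_cases (m : ℕ) : Odd (fib m) ∨ fib m ≡ 2 [MOD 32] ∨ 8 ∣ fib m := by
  have hm : fib m % 32 = fib (m % 48) % 32 :=
    (ZMod.natCast_eq_natCast_iff' _ _ 32).1 (periodic_fib_zmod_32.map_mod_nat m).symm
  have key : ∀ k < 48, fib k % 2 = 1 ∨ fib k % 32 = 2 ∨ fib k % 8 = 0 := by decide
  have := key (m % 48) (Nat.mod_lt _ (by norm_num))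
  simp only [Nat.odd_iff, Nat.ModEq, Nat.dvd_iff_mod_eq_zero]
  omega

theorem exists_fib_modEq_two_pow {m : ℕ} {z : ℤ} (hz : (fib m : ℤ) ≡ z [ZMOD 32]) {n : ℕ}
    (hn : 5 ≤ n) : ∃ m', (fib m' : ℤ) ≡ z [ZMOD 2 ^ n] := by
  unfold Int.ModEq at hz
  rcases fib_mod_32_cases m with h | h | h
  · obtain ⟨m', -, hm'⟩ := exists_even_fib_modEq_two_pow (z := z)
      (by rw [Nat.odd_iff] at h; rw [Int.odd_iff]; omega) (by omega : 2 ≤ n)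
    exact ⟨m', hm'⟩
  · unfold Nat.ModEq at h
    exact exists_fib_modEq_two_pow_of_modEq_two (by unfold Int.ModEq; omega) hn
  · exact exists_fib_modEq_two_pow_of_eight_dvd (by omega) (by omega : 3 ≤ n)

theorem range_fib_zmod_two_pow_eq_preimage {k : ℕ} (h : 32 ∣ 2 ^ k) :
    Set.range (fun n => (fib n : ZMod (2 ^ k))) =
      ZMod.castHom h (ZMod 32) ⁻¹' Set.range (fun n => (fib n : ZMod 32)) := by
  ext x
  simp only [Set.mem_range, Set.mem_preimage]
  constructor
  · rintro ⟨n, rfl⟩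
    exact ⟨n, (map_natCast _ _).symm⟩
  · rintro ⟨m, hm⟩
    have hk : 5 ≤ k := (Nat.pow_dvd_pow_iff_le_right (by norm_num : 1 < 2)).1 (by simpa using h)
    have : NeZero (2 ^ k) := ⟨by positivity⟩
    rw [ZMod.castHom_apply, ZMod.cast_eq_val, ZMod.natCast_eq_natCast_iff] at hm
    obtain ⟨m', hm'⟩ := exists_fib_modEq_two_pow (Int.natCast_modEq_iff.2 hm) hk
    refine ⟨m', ?_⟩
    rw [← ZMod.natCast_zmod_val x, ZMod.natCast_eq_natCast_iff]
    exact Int.natCast_modEq_iff.1 (by exact_mod_cast hm')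

theorem card_range_fib_zmod_two_pow {k : ℕ} (hk : 5 ≤ k) :
    Nat.card (Set.range fun n => (fib n : ZMod (2 ^ k))) * 32 = 21 * 2 ^ k := by
  have h : 32 ∣ 2 ^ k := Nat.pow_dvd_pow 2 hk
  have : NeZero (2 ^ k) := ⟨by positivity⟩
  set f := (ZMod.castHom h (ZMod 32)).toAddMonoidHom
  have hf : Surjective f := ZMod.castHom_surjective h
  have hrange : Nat.card (Set.range fun n => (fib n : ZMod (2 ^ k))) = 21 * Nat.card f.ker := by
    rw [range_fib_zmod_two_pow_eq_preimage h, ← card_range_fib_zmod_32]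
    exact f.card_preimage_eq_mul_card_ker hf _
  have hcard : 2 ^ k = 32 * Nat.card f.ker := by
    simpa using f.card_preimage_eq_mul_card_ker hf Set.univ
  rw [hrange]
  linarith

theorem limiting_density_fibonacci_mod_powers_of_two :
    Filter.Tendsto
      (fun lam : ℕ =>
        (Nat.card (Set.range fun n : ℕ => (Nat.fib n : ZMod (2 ^ lam))) : ℝ) / (2 : ℝ) ^ lam)
      Filter.atTop (nhds (21 / 32)) := by
  refine tendsto_const_nhds.congr' (Filter.eventually_atTop.2 ⟨5, fun k hk => ?_⟩)
  have h : (Nat.card (Set.range fun n => (fib n : ZMod (2 ^ k))) : ℝ) * 32 = 21 * 2 ^ k := by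
    exact_mod_cast card_range_fib_zmod_two_pow hk
  rw [eq_div_iff (by positivity)]
  linarith
end

section
/- Let p ≠ 2 be a prime. Then α(p) divides π(p), and: π(p) = 4·α(p) if α(p) is odd; π(p) = α(p) if α(p) is even but not divisible by 4; and π(p) = 2·α(p) if α(p) is divisible by 4. -/
private lemma fibz_add (p m n : ℕ) :
    ((Nat.fib (m + n + 1) : ZMod p)) =
      Nat.fib m * Nat.fib n + Nat.fib (m + 1) * Nat.fib (n + 1) := by
  rw [Nat.fib_add]; push_cast; ring

private lemma cassini (p n : ℕ) :
    (Nat.fib (n+1) : ZMod p)^2 - Nat.fib (n+1) * Nat.fib n - (Nat.fib n : ZMod p)^2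
      = (-1)^n := by
  induction n with
  | zero => simp
  | succ k ih =>
    have h2 : ((Nat.fib (k+2) : ZMod p)) = Nat.fib k + Nat.fib (k+1) := by
      rw [Nat.fib_add_two]; push_cast; ring
    have : (Nat.fib (k+2) : ZMod p)^2 - Nat.fib (k+2) * Nat.fib (k+1) - (Nat.fib (k+1):ZMod p)^2
        = -((Nat.fib (k+1) : ZMod p)^2 - Nat.fib (k+1) * Nat.fib k - (Nat.fib k : ZMod p)^2) := by
      rw [h2]; ring
    show (Nat.fib (k+2) : ZMod p)^2 - Nat.fib (k+2) * Nat.fib (k+1) - (Nat.fib (k+1):ZMod p)^2 = (-1)^(k+1)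
    rw [this, ih]; ring

private lemma exists_fib_period (p : ℕ) (hp : p.Prime) :
    ∃ D, 1 ≤ D ∧ (Nat.fib D : ZMod p) = 0 ∧ (Nat.fib (D+1) : ZMod p) = 1 := by
  haveI : Fact p.Prime := ⟨hp⟩
  set g : ℕ → ZMod p × ZMod p := fun n => (Nat.fib n, Nat.fib (n+1)) with hg
  obtain ⟨x, y, hne, heq⟩ := Finite.exists_ne_map_eq_of_infinite g
  wlog hxy : x < y generalizing x y
  · exact this y x hne.symm heq.symm (by omega)
  set D := y - x with hD
  have hstep : ∀ n, g (n+1) = g (n+1+D) → g n = g (n+D) := by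
    intro n h
    have h1 : (Nat.fib (n+1) : ZMod p) = Nat.fib (n+1+D) := congrArg Prod.fst h
    have h2 : (Nat.fib (n+2) : ZMod p) = Nat.fib (n+2+D) := by
      have := congrArg Prod.snd h
      simpa [hg, show n+1+D+1 = n+2+D by omega] using this
    have h0 : (Nat.fib n : ZMod p) = Nat.fib (n+D) := by
      have e1 : (Nat.fib (n+2) : ZMod p) = Nat.fib n + Nat.fib (n+1) := by
        rw [Nat.fib_add_two]; push_cast; ring
      have e2 : (Nat.fib (n+D+2) : ZMod p) = Nat.fib (n+D) + Nat.fib (n+D+1) := by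
        rw [Nat.fib_add_two]; push_cast; ring
      have : (Nat.fib n : ZMod p) + Nat.fib (n+1) = Nat.fib (n+D) + Nat.fib (n+D+1) := by
        rw [← e1, ← e2, h2, show n+2+D = n+D+2 by omega]
      have h1' : (Nat.fib (n+1) : ZMod p) = Nat.fib (n+D+1) := by
        rw [h1, show n+1+D = n+D+1 from by omega]
      rw [h1'] at this
      exact add_right_cancel this
    have h1' : (Nat.fib (n+1) : ZMod p) = Nat.fib (n+D+1) := by
      rw [h1, show n+1+D = n+D+1 from by omega]
    simp [hg, h0, h1']
  have key : ∀ j, g (x - j) = g (x - j + D) := by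
    intro j
    induction j with
    | zero =>
      have e : x - 0 + D = y := by omega
      rw [e]; exact heq
    | succ k ih =>
      rcases Nat.lt_or_ge k x with hk | hk
      · have : x - (k+1) + 1 = x - k := by omega
        apply hstep
        rw [this]; exact ih
      · have : x - (k+1) = x - k := by omega
        rw [this]; exact ih
  have h0 := key x
  simp only [Nat.sub_self] at h0
  have hfD : (Nat.fib D : ZMod p) = 0 := by
    have := congrArg Prod.fst h0
    simpa [hg] using this.symm
  have hfD1 : (Nat.fib (D+1) : ZMod p) = 1 := by
    have := congrArg Prod.snd h0
    simpa [hg] using this.symm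
  exact ⟨D, by omega, hfD, hfD1⟩

/-- The Pisano period of the Fibonacci sequence modulo `p`: the least `m ≥ 1`
with `F (n + m) ≡ F n (mod p)` for all `n`. -/
noncomputable def pisano (p : ℕ) : ℕ :=
  sInf {m | 1 ≤ m ∧ ∀ n, Nat.fib (n + m) ≡ Nat.fib n [MOD p]}

/-- The restricted period length `α(p)`: the least `m ≥ 1` with `F m ≡ 0 (mod p)`. -/
noncomputable def fibEntry (p : ℕ) : ℕ :=
  sInf {m | 1 ≤ m ∧ p ∣ Nat.fib m}

theorem pisano_ratio_trichotomy (p : ℕ) (hp : p.Prime) (hp2 : p ≠ 2) :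
    fibEntry p ∣ pisano p ∧
    (Odd (fibEntry p) → pisano p = 4 * fibEntry p) ∧
    (Even (fibEntry p) → ¬ 4 ∣ fibEntry p → pisano p = fibEntry p) ∧
    (4 ∣ fibEntry p → pisano p = 2 * fibEntry p) := by
  haveI : Fact p.Prime := ⟨hp⟩
  haveI : Fact (2 < p) := ⟨lt_of_le_of_ne hp.two_le (Ne.symm hp2)⟩
  obtain ⟨D, hD1, hD0, hDone⟩ := exists_fib_period p hp
  set a := fibEntry p with ha
  have haS : 1 ≤ a ∧ p ∣ Nat.fib a := by
    have : a ∈ {m | 1 ≤ m ∧ p ∣ Nat.fib m} := by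
      apply Nat.sInf_mem
      exact ⟨D, hD1, (ZMod.natCast_eq_zero_iff _ _).mp hD0⟩
    exact this
  obtain ⟨ha1, haf⟩ := haS
  have hmin : ∀ m, 1 ≤ m → p ∣ Nat.fib m → a ≤ m := fun m h1 h2 => Nat.sInf_le ⟨h1, h2⟩
  have hfz : (Nat.fib a : ZMod p) = 0 := (ZMod.natCast_eq_zero_iff _ _).mpr haf
  -- entry point divides
  have hdvd : ∀ n, p ∣ Nat.fib n → a ∣ n := by
    intro n h
    have hg : p ∣ Nat.fib (Nat.gcd a n) := by
      rw [Nat.fib_gcd]; exact Nat.dvd_gcd haf h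
    have hg1 : 1 ≤ Nat.gcd a n := Nat.gcd_pos_of_pos_left n ha1
    have hle : Nat.gcd a n ≤ a := Nat.le_of_dvd ha1 (Nat.gcd_dvd_left a n)
    have : Nat.gcd a n = a := le_antisymm hle (hmin _ hg1 hg)
    rw [← this]; exact Nat.gcd_dvd_right a n
  set s : ZMod p := (Nat.fib (a+1) : ZMod p) with hs
  have hshift : ∀ n, (Nat.fib (n + a) : ZMod p) = s * Nat.fib n := by
    intro n
    cases n with
    | zero => simp [hfz]
    | succ k =>
      have := fibz_add p k a
      rw [show k + 1 + a = k + a + 1 from by omega, this, hfz]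
      ring
  have hpow : ∀ j n, (Nat.fib (n + j * a) : ZMod p) = s ^ j * Nat.fib n := by
    intro j
    induction j with
    | zero => simp
    | succ k ih =>
      intro n
      have : n + (k+1) * a = (n + k * a) + a := by ring
      rw [this, hshift, ih, pow_succ]
      ring
  have hs2 : s ^ 2 = (-1) ^ a := by
    have := cassini p a
    rw [hfz] at this
    simpa using this
  -- characterization of the Pisano set
  have charS : ∀ m, (1 ≤ m ∧ ∀ n, Nat.fib (n + m) ≡ Nat.fib n [MOD p]) ↔
      ∃ j, 1 ≤ j ∧ m = j * a ∧ s ^ j = 1 := by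
    intro m
    constructor
    · rintro ⟨h1, h⟩
      have hm0 : p ∣ Nat.fib m := by
        have := h 0
        simpa [Nat.modEq_zero_iff_dvd] using this
      obtain ⟨j, hj⟩ := hdvd m hm0
      have hm' : m = j * a := by rw [hj, Nat.mul_comm]
      have hj1 : 1 ≤ j := by
        rcases Nat.eq_zero_or_pos j with h0 | h0
        · subst h0; simp at hm'; omega
        · exact h0
      refine ⟨j, hj1, hm', ?_⟩
      have h1m := (ZMod.natCast_eq_natCast_iff _ _ _).mpr (h 1)
      rw [hm', hpow j 1] at h1m
      simpa using h1m
    · rintro ⟨j, hj1, rfl, hsj⟩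
      refine ⟨Nat.one_le_iff_ne_zero.mpr (by positivity), fun n => ?_⟩
      rw [← ZMod.natCast_eq_natCast_iff]
      rw [hpow, hsj, one_mul]
  have key : ∀ c, 1 ≤ c → s ^ c = 1 → (∀ j, 1 ≤ j → j < c → s ^ j ≠ 1) →
      pisano p = c * a := by
    intro c hc1 hsc hmin'
    have hmem : c * a ∈ {m | 1 ≤ m ∧ ∀ n, Nat.fib (n + m) ≡ Nat.fib n [MOD p]} :=
      (charS (c*a)).mpr ⟨c, hc1, rfl, hsc⟩
    apply le_antisymm
    · exact Nat.sInf_le hmem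
    · apply le_csInf ⟨c * a, hmem⟩
      intro m hm
      obtain ⟨j, hj1, rfl, hsj⟩ := (charS m).mp hm
      have hjc : c ≤ j := by
        by_contra hlt
        exact hmin' j hj1 (by omega) hsj
      exact Nat.mul_le_mul_right a hjc
  have hne : (-1 : ZMod p) ≠ 1 := ZMod.neg_one_ne_one
  rcases Nat.even_or_odd a with he | ho
  · -- a even
    obtain ⟨m, hm⟩ := he
    have hm1 : 1 ≤ m := by omega
    have hmfib : (Nat.fib m : ZMod p) ≠ 0 := by
      intro h
      have := hmin m hm1 ((ZMod.natCast_eq_zero_iff _ _).mp h)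
      omega
    -- p ∣ Lucas m
    have hsplit : (Nat.fib m : ZMod p) * (Nat.fib (m-1) + Nat.fib (m+1)) = 0 := by
      have e := fibz_add p m (m-1)
      rw [show m + (m-1) + 1 = a from by omega] at e
      rw [show (m-1) + 1 = m from by omega] at e
      rw [hfz] at e
      linear_combination -e
    have hL : (Nat.fib (m-1) : ZMod p) + Nat.fib (m+1) = 0 :=
      (mul_eq_zero.mp hsplit).resolve_left hmfib
    have hrec : (Nat.fib (m+1) : ZMod p) = Nat.fib m + Nat.fib (m-1) := by
      rw [show m + 1 = (m-1) + 2 from by omega, Nat.fib_add_two]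
      rw [show (m-1) + 1 = m from by omega]
      push_cast; ring
    set u : ZMod p := (Nat.fib (m+1) : ZMod p) with hu
    set v : ZMod p := (Nat.fib m : ZMod p) with hv
    have hv2u : v = 2 * u := by
      have : (Nat.fib (m-1) : ZMod p) = u - v := by rw [hrec]; ring
      rw [this] at hL
      linear_combination -hL
    have hcas : u^2 - u * v - v^2 = (-1)^m := cassini p m
    have h5 : -5 * u^2 = (-1 : ZMod p)^m := by
      rw [hv2u] at hcas
      linear_combination hcas
    have hsval : s = -(-1 : ZMod p)^m := by
      have e := fibz_add p m m
      rw [show m + m + 1 = a + 1 from by omega] at e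
      rw [hs, e, ← hu, ← hv, hv2u]
      linear_combination -h5
    rcases Nat.even_or_odd m with hme | hmo
    · -- 4 ∣ a, s = -1, π = 2a
      have hs1 : s = -1 := by rw [hsval, hme.neg_one_pow]
      have hpi : pisano p = 2 * a := by
        apply key 2 (by norm_num)
        · rw [hs1]; ring
        · intro j hj1 hj2
          interval_cases j
          · rw [pow_one, hs1]; exact hne
      have h4 : 4 ∣ a := by
        obtain ⟨k, hk⟩ := hme
        omega
      exact ⟨⟨2, by omega⟩, fun h => absurd hm (by obtain ⟨k, hk⟩ := h; omega),
        fun _ h => absurd h4 h, fun _ => hpi⟩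
    · -- a ≡ 2 mod 4, s = 1, π = a
      have hs1 : s = 1 := by rw [hsval, hmo.neg_one_pow]; ring
      have hpi : pisano p = a := by
        have := key 1 le_rfl (by rw [pow_one, hs1]) (fun j hj1 hj2 => by omega)
        rwa [one_mul] at this
      have h4 : ¬ 4 ∣ a := by
        obtain ⟨k, hk⟩ := hmo
        omega
      exact ⟨hpi ▸ dvd_refl a, fun h => absurd hm (by obtain ⟨k, hk⟩ := h; omega),
        fun _ _ => hpi, fun h => absurd h h4⟩
  · -- a odd
    have hs2' : s ^ 2 = -1 := by rw [hs2, ho.neg_one_pow]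
    have hpi : pisano p = 4 * a := by
      apply key 4 (by norm_num)
      · have : s ^ 4 = (s^2)^2 := by ring
        rw [this, hs2']; ring
      · intro j hj1 hj2
        interval_cases j
        · intro h
          rw [pow_one] at h
          rw [h] at hs2'
          exact hne (by linear_combination -hs2')
        · rw [hs2']; exact fun h => hne (by linear_combination h)
        · intro h
          have : s^4 = s := by rw [pow_succ, h, one_mul]
          have h4 : s^4 = 1 := by
            have : s ^ 4 = (s^2)^2 := by ring
            rw [this, hs2']; ring
          have hseq : s = 1 := by rw [← ‹s^4 = s›, h4]
          rw [hseq] at hs2'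
          exact hne (by linear_combination -hs2')
    have hae : ¬ Even a := Nat.not_even_iff_odd.mpr ho
    refine ⟨⟨4, by omega⟩, fun _ => hpi, fun h _ => absurd h hae, fun h => ?_⟩
    obtain ⟨k, hk⟩ := h
    exact absurd (⟨2*k, by omega⟩ : Even a) hae
end

section
/- Let p ≠ 2 be a prime. The set {i ∈ {0, 1, …, π(p)−1} : L(i) ≡ 0 (mod p)} of Lucas zeros with respect to p equals: the empty set if α(p) is odd; {α(p)/2} if α(p) is even but not divisible by 4; and {α(p)/2, 3·α(p)/2} if α(p) is divisible by 4. Moreover, if α(p) is divisible by 4 then F(α(p)/2) ≢ F(3·α(p)/2) (mod p). -/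
/-- The Lucas sequence: `L 0 = 2`, `L 1 = 1`, `L (n+2) = L (n+1) + L n`. -/
def lucas : ℕ → ℕ
  | 0 => 2
  | 1 => 1
  | n + 2 => lucas (n + 1) + lucas n

/- ### Auxiliary lemmas -/

theorem lucas_add_fib (n : ℕ) : lucas n + Nat.fib n = 2 * Nat.fib (n + 1) := by
  induction n using Nat.twoStepInduction with
  | zero => simp [lucas]
  | one => simp [lucas]
  | more n ih1 ih2 =>
    have e1 : Nat.fib (n + 2) = Nat.fib n + Nat.fib (n + 1) := Nat.fib_add_two
    have e2 : Nat.fib (n + 3) = Nat.fib (n + 1) + Nat.fib (n + 2) := by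
      rw [show n + 3 = (n + 1) + 2 by omega, Nat.fib_add_two]
    rw [show lucas (n + 2) = lucas (n + 1) + lucas n from rfl,
      show n + 2 + 1 = n + 3 by omega]
    rw [show n + 1 + 1 = n + 2 by omega] at ih2
    omega

theorem fib_mul_lucas (n : ℕ) : Nat.fib (2 * n) = Nat.fib n * lucas n := by
  rw [Nat.fib_two_mul]
  have h1 := lucas_add_fib n
  have h2 : 2 * Nat.fib (n + 1) - Nat.fib n = lucas n := by omega
  rw [h2]

/-- Cassini's identity in `ZMod p`. -/
theorem cassiniZ (p n : ℕ) :
    ((Nat.fib (n + 1) : ZMod p)) ^ 2 - (Nat.fib (n + 2) : ZMod p) * (Nat.fib n : ZMod p)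
      = (-1) ^ n := by
  induction n with
  | zero => simp
  | succ k ih =>
    show (Nat.fib (k + 2) : ZMod p) ^ 2 -
        (Nat.fib (k + 3) : ZMod p) * (Nat.fib (k + 1) : ZMod p) = (-1) ^ (k + 1)
    have h2 : (Nat.fib (k + 2) : ZMod p) = (Nat.fib k : ZMod p) + (Nat.fib (k + 1) : ZMod p) := by
      rw [Nat.fib_add_two]; push_cast; ring
    have h3 : (Nat.fib (k + 3) : ZMod p)
        = (Nat.fib (k + 1) : ZMod p) + (Nat.fib (k + 2) : ZMod p) := by
      rw [show k + 3 = (k + 1) + 2 by omega, Nat.fib_add_two]; push_cast; ring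
    rw [h3, h2]
    rw [h2] at ih
    linear_combination (-1 : ZMod p) * ih

/-- The step map on pairs. -/
def fibStep (p : ℕ) : ZMod p × ZMod p → ZMod p × ZMod p := fun z => (z.2, z.1 + z.2)

theorem fibStep_injective (p : ℕ) : Function.Injective (fibStep p) := by
  intro x y h
  simp only [fibStep, Prod.mk.injEq] at h
  obtain ⟨h1, h2⟩ := h
  have hx : x.1 = y.1 := by rw [h1] at h2; exact add_right_cancel h2
  exact Prod.ext_iff.mpr ⟨hx, h1⟩

theorem fibStep_iterate (p : ℕ) (n : ℕ) :
    (fibStep p)^[n] ((0 : ZMod p), (1 : ZMod p))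
      = ((Nat.fib n : ZMod p), (Nat.fib (n + 1) : ZMod p)) := by
  induction n with
  | zero => simp
  | succ k ih =>
    rw [Function.iterate_succ_apply', ih]
    simp only [fibStep, Prod.mk.injEq]
    refine ⟨by simp, ?_⟩
    rw [show k + 1 + 1 = k + 2 by omega, Nat.fib_add_two]
    push_cast; ring

theorem existsPeriod (p : ℕ) [NeZero p] :
    ∃ m, 1 ≤ m ∧ (Nat.fib m : ZMod p) = 0 ∧ (Nat.fib (m + 1) : ZMod p) = 1 := by
  obtain ⟨i, j, hne, heq⟩ :=
    Finite.exists_ne_map_eq_of_infinite (fun n : ℕ => (fibStep p)^[n] ((0 : ZMod p), 1))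
  have key : ∀ i j : ℕ, i < j →
      (fibStep p)^[i] ((0 : ZMod p), (1 : ZMod p)) = (fibStep p)^[j] ((0 : ZMod p), 1) →
      ∃ m, 1 ≤ m ∧ (Nat.fib m : ZMod p) = 0 ∧ (Nat.fib (m + 1) : ZMod p) = 1 := by
    intro i j hij he
    have h1 : (fibStep p)^[i] ((fibStep p)^[j - i] ((0 : ZMod p), 1))
        = (fibStep p)^[i] ((0 : ZMod p), 1) := by
      rw [← Function.iterate_add_apply, show i + (j - i) = j by omega]
      exact he.symm
    have h2 : (fibStep p)^[j - i] ((0 : ZMod p), (1 : ZMod p)) = ((0 : ZMod p), 1) :=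
      (fibStep_injective p).iterate i h1
    rw [fibStep_iterate p (j - i)] at h2
    simp only [Prod.mk.injEq] at h2
    exact ⟨j - i, by omega, h2.1, h2.2⟩
  rcases Nat.lt_or_ge i j with h | h
  · exact key i j h (heq)
  · exact key j i (by omega) heq.symm

theorem periodIff (p m : ℕ) :
    ((Nat.fib m : ZMod p) = 0 ∧ (Nat.fib (m + 1) : ZMod p) = 1)
      ↔ ∀ n, Nat.fib (n + m) ≡ Nat.fib n [MOD p] := by
  constructor
  · rintro ⟨h0, h1⟩ n
    rw [← ZMod.natCast_eq_natCast_iff]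
    cases n with
    | zero => simpa using h0
    | succ k =>
      have h2 : (Nat.fib (k + 1 + m) : ZMod p)
          = (Nat.fib m : ZMod p) * (Nat.fib k : ZMod p)
            + (Nat.fib (m + 1) : ZMod p) * (Nat.fib (k + 1) : ZMod p) := by
        rw [show k + 1 + m = m + k + 1 by omega, Nat.fib_add]; push_cast; ring
      rw [h2, h0, h1]; ring
  · intro h
    have h0 := h 0
    have h1 := h 1
    rw [← ZMod.natCast_eq_natCast_iff] at h0 h1
    rw [show 0 + m = m by omega] at h0
    rw [show 1 + m = m + 1 by omega] at h1
    constructor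
    · simpa using h0
    · simpa using h1

theorem lucas_zeros_description (p : ℕ) (hp : p.Prime) (hp2 : p ≠ 2) :
    (Odd (fibEntry p) →
      {i : ℕ | i < pisano p ∧ p ∣ lucas i} = (∅ : Set ℕ)) ∧
    (Even (fibEntry p) → ¬ 4 ∣ fibEntry p →
      {i : ℕ | i < pisano p ∧ p ∣ lucas i} = {fibEntry p / 2}) ∧
    (4 ∣ fibEntry p →
      {i : ℕ | i < pisano p ∧ p ∣ lucas i} = {fibEntry p / 2, 3 * fibEntry p / 2} ∧
      ¬ Nat.fib (fibEntry p / 2) ≡ Nat.fib (3 * fibEntry p / 2) [MOD p]) := by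
  haveI : NeZero p := ⟨hp.pos.ne'⟩
  haveI : Fact p.Prime := ⟨hp⟩
  set a := fibEntry p with ha
  -- Pisano period facts
  have hPne : {m | 1 ≤ m ∧ ∀ n, Nat.fib (n + m) ≡ Nat.fib n [MOD p]}.Nonempty := by
    obtain ⟨m, hm1, hm0, hm1'⟩ := existsPeriod p
    exact ⟨m, hm1, (periodIff p m).mp ⟨hm0, hm1'⟩⟩
  obtain ⟨hπ1, hπper⟩ : 1 ≤ pisano p ∧ ∀ n, Nat.fib (n + pisano p) ≡ Nat.fib n [MOD p] :=
    Nat.sInf_mem hPne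
  have hπ := (periodIff p (pisano p)).mpr hπper
  have hπle : ∀ m, 1 ≤ m → (Nat.fib m : ZMod p) = 0 → (Nat.fib (m + 1) : ZMod p) = 1 →
      pisano p ≤ m :=
    fun m h1 h2 h3 => Nat.sInf_le ⟨h1, (periodIff p m).mp ⟨h2, h3⟩⟩
  -- fibEntry facts
  have hAne : {m | 1 ≤ m ∧ p ∣ Nat.fib m}.Nonempty :=
    ⟨pisano p, hπ1, (ZMod.natCast_eq_zero_iff _ p).mp hπ.1⟩
  obtain ⟨hα1, hαdvd⟩ : 1 ≤ a ∧ p ∣ Nat.fib a := Nat.sInf_mem hAne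
  have hαle : ∀ m, 1 ≤ m → p ∣ Nat.fib m → a ≤ m := fun m h1 h2 => Nat.sInf_le ⟨h1, h2⟩
  have hαz : (Nat.fib a : ZMod p) = 0 := (ZMod.natCast_eq_zero_iff _ p).mpr hαdvd
  -- divisibility characterization
  have hfibdvd : ∀ n, p ∣ Nat.fib n ↔ a ∣ n := by
    intro n
    constructor
    · intro h
      have hg : p ∣ Nat.fib (Nat.gcd a n) := by
        rw [Nat.fib_gcd]; exact Nat.dvd_gcd hαdvd h
      have hpos : 1 ≤ Nat.gcd a n := Nat.gcd_pos_of_pos_left n hα1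
      have hge := hαle _ hpos hg
      have hle : Nat.gcd a n ≤ a := Nat.le_of_dvd hα1 (Nat.gcd_dvd_left a n)
      have heq : Nat.gcd a n = a := le_antisymm hle hge
      rw [← heq]; exact Nat.gcd_dvd_right a n
    · intro h; exact dvd_trans hαdvd (Nat.fib_dvd a n h)
  -- shift formula
  have hshift : ∀ n, (Nat.fib (n + a) : ZMod p)
      = (Nat.fib (a + 1) : ZMod p) * (Nat.fib n : ZMod p) := by
    intro n
    cases n with
    | zero => simp [hαz]
    | succ k =>
      rw [show k + 1 + a = a + k + 1 by omega, Nat.fib_add]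
      push_cast
      rw [hαz]; ring
  have hiter : ∀ k n, (Nat.fib (n + k * a) : ZMod p)
      = (Nat.fib (a + 1) : ZMod p) ^ k * (Nat.fib n : ZMod p) := by
    intro k
    induction k with
    | zero => intro n; simp
    | succ j ih =>
      intro n
      rw [show n + (j + 1) * a = (n + j * a) + a by ring, hshift (n + j * a), ih n]
      ring
  have h2ne : (2 : ZMod p) ≠ 0 := by
    intro h
    apply hp2
    have hd : p ∣ 2 := (ZMod.natCast_eq_zero_iff 2 p).mp (by push_cast; exact h)
    exact (Nat.prime_dvd_prime_iff_eq hp Nat.prime_two).mp hd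
  have hm1ne : (-1 : ZMod p) ≠ 1 := by
    intro h
    apply h2ne
    linear_combination (-1 : ZMod p) * h
  -- Lucas zero characterization
  have hLz : ∀ i, p ∣ lucas i ↔ (a ∣ 2 * i ∧ ¬ a ∣ i) := by
    intro i
    constructor
    · intro hL
      have hfi : ¬ p ∣ Nat.fib i := by
        intro hfi
        have h2f : p ∣ 2 * Nat.fib (i + 1) := by
          rw [← lucas_add_fib i]; exact Nat.dvd_add hL hfi
        rcases (Nat.Prime.dvd_mul hp).mp h2f with h | h
        · exact hp2 ((Nat.prime_dvd_prime_iff_eq hp Nat.prime_two).mp h)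
        · have hg : p ∣ Nat.gcd (Nat.fib i) (Nat.fib (i + 1)) := Nat.dvd_gcd hfi h
          have hco : Nat.gcd (Nat.fib i) (Nat.fib (i + 1)) = 1 := Nat.fib_coprime_fib_succ i
          rw [hco] at hg
          have := Nat.le_of_dvd one_pos hg
          have := hp.two_le
          omega
      constructor
      · exact (hfibdvd (2 * i)).mp (by rw [fib_mul_lucas]; exact Dvd.dvd.mul_left hL _)
      · intro hai; exact hfi ((hfibdvd i).mpr hai)
    · rintro ⟨h2i, hi⟩
      have hd : p ∣ Nat.fib i * lucas i := by
        rw [← fib_mul_lucas]; exact (hfibdvd _).mpr h2i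
      rcases (Nat.Prime.dvd_mul hp).mp hd with h | h
      · exact absurd ((hfibdvd i).mp h) hi
      · exact h
  -- even entry setup
  have hEvenSetup : ∀ b, a = 2 * b →
      p ∣ lucas b ∧ (Nat.fib (a + 1) : ZMod p) = (-1) ^ (b + 1) := by
    intro b hb
    have hb1 : 1 ≤ b := by omega
    have hnab : ¬ a ∣ b := fun h => by have := Nat.le_of_dvd hb1 h; omega
    have hLb : p ∣ lucas b := (hLz b).mpr ⟨⟨1, by omega⟩, hnab⟩
    refine ⟨hLb, ?_⟩
    have hcb : (lucas b : ZMod p) = 0 := (ZMod.natCast_eq_zero_iff _ p).mpr hLb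
    have hfb : (Nat.fib b : ZMod p) = 2 * (Nat.fib (b + 1) : ZMod p) := by
      have h : ((lucas b : ZMod p)) + (Nat.fib b : ZMod p) = 2 * (Nat.fib (b + 1) : ZMod p) := by
        exact_mod_cast congrArg (fun x : ℕ => (x : ZMod p)) (lucas_add_fib b)
      rw [hcb] at h
      linear_combination h
    obtain ⟨c, hc⟩ : ∃ c, b = c + 1 := ⟨b - 1, by omega⟩
    have hcas := cassiniZ p c
    rw [show c + 1 = b by omega] at hcas
    rw [show c + 2 = b + 1 by omega] at hcas
    have hstep : (Nat.fib (b + 1) : ZMod p) = (Nat.fib c : ZMod p) + (Nat.fib b : ZMod p) := by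
      have h : (Nat.fib (c + 2) : ZMod p)
          = (Nat.fib c : ZMod p) + (Nat.fib (c + 1) : ZMod p) := by
        rw [Nat.fib_add_two]; push_cast; ring
      rw [show c + 2 = b + 1 by omega, show c + 1 = b by omega] at h
      exact h
    have hfc : (Nat.fib c : ZMod p) = - (Nat.fib (b + 1) : ZMod p) := by
      linear_combination - hstep - hfb
    have hsign : ((-1 : ZMod p)) ^ c = (-1) ^ (b + 1) := by
      rw [show b + 1 = c + 2 by omega, pow_succ, pow_succ]; ring
    rw [show a + 1 = 2 * b + 1 by omega, Nat.fib_two_mul_add_one]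
    push_cast
    rw [← hsign]
    linear_combination hcas + (Nat.fib (b + 1) : ZMod p) * hfc
  refine ⟨?_, ?_, ?_⟩
  -- Case 1: a odd
  · intro hodd
    ext i
    simp only [Set.mem_setOf_eq, Set.mem_empty_iff_false, iff_false, not_and]
    intro _ hL
    obtain ⟨h2i, hi⟩ := (hLz i).mp hL
    apply hi
    have h2a : ¬ (2 : ℕ) ∣ a := by
      have := Nat.odd_iff.mp hodd; omega
    have hco : Nat.Coprime a 2 :=
      Nat.Coprime.symm ((Nat.Prime.coprime_iff_not_dvd Nat.prime_two).mpr h2a)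
    exact Nat.Coprime.dvd_of_dvd_mul_left hco h2i
  -- Case 2: a ≡ 2 mod 4
  · intro heven h4
    obtain ⟨b, hb⟩ : ∃ b, a = 2 * b := by
      obtain ⟨b, hbb⟩ := heven; exact ⟨b, by omega⟩
    have hb1 : 1 ≤ b := by omega
    obtain ⟨hLb, he⟩ := hEvenSetup b hb
    have he1 : (Nat.fib (a + 1) : ZMod p) = 1 := by
      rw [he]
      exact Even.neg_one_pow (Nat.even_iff.mpr (by omega))
    have hπa : pisano p = a := by
      apply le_antisymm
      · exact hπle a hα1 hαz he1
      · exact Nat.le_of_dvd (by omega)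
          ((hfibdvd _).mp ((ZMod.natCast_eq_zero_iff _ p).mp hπ.1))
    ext i
    simp only [Set.mem_setOf_eq, Set.mem_singleton_iff]
    have hhalf : a / 2 = b := by omega
    rw [hπa, hhalf]
    constructor
    · rintro ⟨hiπ, hL⟩
      obtain ⟨h2i, hi⟩ := (hLz i).mp hL
      obtain ⟨c, hc⟩ := h2i
      have h2ibc : 2 * i = 2 * (b * c) := by rw [hc, hb]; ring
      have hic : i = b * c := Nat.eq_of_mul_eq_mul_left (by norm_num) h2ibc
      have hcne : c ≠ 0 := by
        rintro rfl
        exact hi (by rw [hic, mul_zero]; exact dvd_zero a)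
      have hclt : c < 2 := by
        by_contra hge
        push_neg at hge
        have hle : b * 2 ≤ b * c := Nat.mul_le_mul_left b hge
        have : b * 2 ≤ i := hic ▸ hle
        omega
      have hc1 : c = 1 := by omega
      rw [hc1, mul_one] at hic
      exact hic
    · rintro rfl
      exact ⟨by omega, hLb⟩
  -- Case 3: 4 ∣ a
  · intro h4
    obtain ⟨b, hb⟩ : ∃ b, a = 2 * b := ⟨a / 2, by omega⟩
    have hb1 : 1 ≤ b := by omega
    obtain ⟨hLb, he⟩ := hEvenSetup b hb
    have hem : (Nat.fib (a + 1) : ZMod p) = -1 := by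
      rw [he]
      exact Odd.neg_one_pow (Nat.odd_iff.mpr (by omega))
    have hπ2a : pisano p = 2 * a := by
      apply le_antisymm
      · apply hπle (2 * a) (by omega)
        · have h0 := hiter 2 0
          simpa using h0
        · have h1 := hiter 2 1
          rw [show 2 * a + 1 = 1 + 2 * a by omega, h1, hem]
          simp
      · have hd : a ∣ pisano p :=
          (hfibdvd _).mp ((ZMod.natCast_eq_zero_iff _ p).mp hπ.1)
        obtain ⟨k, hk⟩ := hd
        have hk1 : k ≠ 1 := by
          rintro rfl
          rw [mul_one] at hk
          have h1 := hπ.2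
          rw [hk] at h1
          exact hm1ne (hem.symm.trans h1)
        have hk0 : k ≠ 0 := by
          rintro rfl
          rw [mul_zero] at hk
          omega
        calc 2 * a = a * 2 := by ring
          _ ≤ a * k := Nat.mul_le_mul_left a (by omega)
          _ = pisano p := hk.symm
    have hhalf : a / 2 = b := by omega
    have hhalf3 : 3 * a / 2 = 3 * b := by omega
    constructor
    · ext i
      simp only [Set.mem_setOf_eq, Set.mem_insert_iff, Set.mem_singleton_iff]
      rw [hπ2a, hhalf, hhalf3]
      constructor
      · rintro ⟨hiπ, hL⟩
        obtain ⟨h2i, hi⟩ := (hLz i).mp hL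
        obtain ⟨c, hc⟩ := h2i
        have h2ibc : 2 * i = 2 * (b * c) := by rw [hc, hb]; ring
        have hic : i = b * c := Nat.eq_of_mul_eq_mul_left (by norm_num) h2ibc
        have hcodd : ¬ 2 ∣ c := by
          rintro ⟨d, rfl⟩
          exact hi ⟨d, by rw [hic, hb]; ring⟩
        have hclt : c < 4 := by
          by_contra hge
          push_neg at hge
          have hle : b * 4 ≤ b * c := Nat.mul_le_mul_left b hge
          have : b * 4 ≤ i := hic ▸ hle
          omega
        have hc13 : c = 1 ∨ c = 3 := by omega
        rcases hc13 with rfl | rfl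
        · left; omega
        · right; omega
      · rintro (rfl | rfl)
        · exact ⟨by omega, hLb⟩
        · refine ⟨by omega, ?_⟩
          apply (hLz (3 * b)).mpr
          constructor
          · exact ⟨3, by rw [hb]; ring⟩
          · intro hd
            have hd2 : a ∣ 2 * b := ⟨1, by omega⟩
            have hdb : a ∣ b := by
              have h := Nat.dvd_sub hd hd2
              rwa [show 3 * b - 2 * b = b by omega] at h
            have := Nat.le_of_dvd hb1 hdb
            omega
    · rw [hhalf, hhalf3, ← ZMod.natCast_eq_natCast_iff]
      intro hEq
      have h3b : (Nat.fib (3 * b) : ZMod p) = - (Nat.fib b : ZMod p) := by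
        rw [show 3 * b = b + 1 * a by omega, hiter 1 b, pow_one, hem]
        ring
      have hfbne : (Nat.fib b : ZMod p) ≠ 0 := by
        intro h
        have hdb : a ∣ b := (hfibdvd b).mp ((ZMod.natCast_eq_zero_iff _ p).mp h)
        have := Nat.le_of_dvd hb1 hdb
        omega
      rw [h3b] at hEq
      have h20 : (2 : ZMod p) * (Nat.fib b : ZMod p) = 0 := by linear_combination hEq
      rcases mul_eq_zero.mp h20 with h | h
      · exact h2ne h
      · exact hfbne h
end

section
/- Let p be a prime with p ≡ 1 or 4 (mod 5) (so p ∉ {2, 5} and 5 is a square in ℤ_p). Let φ ∈ ℤ_p satisfy φ² = φ + 1, and let u ∈ ℤ_p satisfy u^{p−1} = 1 and ‖φ − u‖_p < 1. Then ‖F(p−1)‖_p = ‖φ − u‖_p (equivalently, since u is a unit, ‖F(p−1)‖_p = ‖φ·u^{−1} − 1‖_p). -/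
/-!
Binet's formula `(2φ - 1) F(n) = φⁿ - (1 - φ)ⁿ` together with `φ (1 - φ) = -1` gives
`φⁿ (2φ - 1) F(n) = (φⁿ - 1)(φⁿ + 1)` for even `n`. For `n = p - 1` the factors `φ`,
`2φ - 1` (whose square is `5`) and `φⁿ + 1 ≡ 2` are units, while
`φⁿ - 1 = φⁿ - uⁿ = (φ - u) S` with `S = ∑ φⁱ u^(n-1-i) ≡ n u^(n-1)` modulo `φ - u`,
a unit since `p ∤ n`.
-/

open Finset

section Fibonacci

variable {R : Type*} [CommRing R] {φ : R}

theorem two_mul_sub_one_mul_fib (hφ : φ ^ 2 = φ + 1) (n : ℕ) :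
    (2 * φ - 1) * Nat.fib n = φ ^ n - (1 - φ) ^ n := by
  induction n using Nat.twoStepInduction with
  | zero => simp
  | one => rw [Nat.fib_one, Nat.cast_one]; ring
  | more n ih₁ ih₂ =>
    rw [Nat.fib_add_two]
    push_cast
    linear_combination ih₂ + ih₁ + ((1 - φ) ^ n - φ ^ n) * hφ

theorem pow_mul_two_mul_sub_one_mul_fib (hφ : φ ^ 2 = φ + 1) {n : ℕ} (hn : Even n) :
    φ ^ n * ((2 * φ - 1) * Nat.fib n) = (φ ^ n - 1) * (φ ^ n + 1) := by
  have hprod : φ ^ n * (1 - φ) ^ n = 1 := by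
    rw [← mul_pow, show φ * (1 - φ) = -1 by linear_combination -hφ, hn.neg_one_pow]
  rw [two_mul_sub_one_mul_fib hφ]
  linear_combination -hprod

end Fibonacci

theorem sub_dvd_geom_sum₂_sub_natCast_mul {R : Type*} [CommRing R] (x y : R) (n : ℕ) :
    x - y ∣ ∑ i ∈ range n, x ^ i * y ^ (n - 1 - i) - n * y ^ (n - 1) := by
  rw [← geom_sum₂_self, ← sum_sub_distrib]
  refine dvd_sum fun i _ => ?_
  rw [← sub_mul]
  exact (sub_dvd_pow_sub_pow x y i).mul_right _

theorem IsUltrametricDist.norm_add_eq_left {E : Type*} [SeminormedAddGroup E]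
    [IsUltrametricDist E] {a b : E} (h : ‖b‖ < ‖a‖) : ‖a + b‖ = ‖a‖ := by
  rw [norm_add_eq_max_of_norm_ne_norm h.ne', max_eq_left h.le]

theorem norm_eq_one_of_norm_pow_eq_one {R : Type*} [SeminormedRing R] [NormOneClass R]
    [NormMulClass R] {x : R} {n : ℕ} (hn : n ≠ 0) (h : ‖x ^ n‖ = 1) : ‖x‖ = 1 :=
  (pow_eq_one_iff_of_nonneg (norm_nonneg x) hn).mp (by rwa [← norm_pow])

namespace PadicInt

variable {p : ℕ} [Fact p.Prime]

theorem norm_le_of_dvd {a b : ℤ_[p]} (h : a ∣ b) : ‖b‖ ≤ ‖a‖ := by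
  obtain ⟨c, rfl⟩ := h
  rw [norm_mul]
  exact mul_le_of_le_one_right (norm_nonneg a) (norm_le_one c)

theorem norm_natCast_eq_one_of_not_dvd {n : ℕ} (hn : ¬ p ∣ n) : ‖(n : ℤ_[p])‖ = 1 :=
  norm_natCast_eq_one_iff.mpr ((Nat.Prime.coprime_iff_not_dvd Fact.out).mpr hn)

theorem norm_pow_sub_pow_eq_norm_sub {x y : ℤ_[p]} {n : ℕ} (hn : ¬ p ∣ n) (hy : ‖y‖ = 1)
    (hxy : ‖x - y‖ < 1) : ‖x ^ n - y ^ n‖ = ‖x - y‖ := by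
  set S := ∑ i ∈ range n, x ^ i * y ^ (n - 1 - i)
  have hlead : ‖(n : ℤ_[p]) * y ^ (n - 1)‖ = 1 := by
    rw [norm_mul, norm_pow, hy, one_pow, mul_one, norm_natCast_eq_one_of_not_dvd hn]
  have hrest : ‖S - n * y ^ (n - 1)‖ < ‖(n : ℤ_[p]) * y ^ (n - 1)‖ :=
    hlead ▸ (norm_le_of_dvd (sub_dvd_geom_sum₂_sub_natCast_mul x y n)).trans_lt hxy
  have hS : ‖S‖ = 1 := by
    rw [← add_sub_cancel (n * y ^ (n - 1) : ℤ_[p]) S,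
      IsUltrametricDist.norm_add_eq_left hrest, hlead]
  rw [← geom_sum₂_mul, norm_mul, hS, one_mul]

end PadicInt

theorem wall_exponent_characterization (p : ℕ) [Fact p.Prime]
    (hp5 : p % 5 = 1 ∨ p % 5 = 4)
    (φ u : ℤ_[p]) (hφ : φ ^ 2 = φ + 1)
    (hu : u ^ (p - 1) = 1) (hu2 : ‖φ - u‖ < 1) :
    ‖(Nat.fib (p - 1) : ℤ_[p])‖ = ‖φ - u‖ := by
  have hp : p.Prime := Fact.out
  have hp_two_le := hp.two_le
  have hp2 : ¬ p ∣ 2 := fun h => by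
    have := (Nat.prime_dvd_prime_iff_eq hp Nat.prime_two).mp h; omega
  have hp5' : ¬ p ∣ 5 := fun h => by
    have := (Nat.prime_dvd_prime_iff_eq hp Nat.prime_five).mp h; omega
  have hu1 : ‖u‖ = 1 :=
    norm_eq_one_of_norm_pow_eq_one (n := p - 1) (by omega) (by rw [hu, norm_one])
  have hφ1 : ‖φ‖ = 1 := by
    simpa [hu1] using IsUltrametricDist.norm_add_eq_left (a := u) (b := φ - u) (hu1 ▸ hu2)
  have hminus : ‖φ ^ (p - 1) - 1‖ = ‖φ - u‖ := by
    rw [← hu]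
    exact PadicInt.norm_pow_sub_pow_eq_norm_sub
      (Nat.not_dvd_of_pos_of_lt (by omega) (by omega)) hu1 hu2
  have hplus : ‖φ ^ (p - 1) + 1‖ = 1 := by
    have h2 : ‖(2 : ℤ_[p])‖ = 1 := by exact_mod_cast PadicInt.norm_natCast_eq_one_of_not_dvd hp2
    rw [show φ ^ (p - 1) + 1 = 2 + (φ ^ (p - 1) - 1) by ring,
      IsUltrametricDist.norm_add_eq_left (by rwa [hminus, h2]), h2]
  have hsqrt5 : ‖2 * φ - 1‖ = 1 := by
    refine norm_eq_one_of_norm_pow_eq_one two_ne_zero ?_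
    rw [show (2 * φ - 1) ^ 2 = ((5 : ℕ) : ℤ_[p]) by push_cast; linear_combination 4 * hφ]
    exact PadicInt.norm_natCast_eq_one_of_not_dvd hp5'
  have key := congrArg norm
    (pow_mul_two_mul_sub_one_mul_fib hφ (hp.even_sub_one (by rintro rfl; omega)))
  rwa [norm_mul, norm_mul, norm_mul, norm_pow, hφ1, one_pow, one_mul, hsqrt5, one_mul, hminus,
    hplus, mul_one] at key
end

section
/- Let p be a prime, let x ∈ ℤ_p with ‖x‖_p = 1, and let u ∈ ℤ_p satisfy u^{p−1} = 1 and ‖x − u‖_p < 1. Then ‖x^p − x‖_p = ‖x − u‖_p. -/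
theorem norm_pow_p_sub_self_eq_norm_sub_teichmuller (p : ℕ) [Fact p.Prime]
    (x u : ℤ_[p]) (hx : ‖x‖ = 1) (hu : u ^ (p - 1) = 1) (hxu : ‖x - u‖ < 1) :
    ‖x ^ p - x‖ = ‖x - u‖ := by
  have hp : 1 ≤ p := (Fact.out : p.Prime).one_lt.le
  have hup : u ^ p = u := by
    have h := pow_succ u (p - 1)
    rw [hu, one_mul, Nat.sub_add_cancel hp] at h
    exact h
  by_cases hxe : x = u
  · subst hxe; rw [hup, sub_self]
  have hne : ‖x - u‖ ≠ 0 := by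
    simpa [sub_eq_zero] using hxe
  -- s = geometric sum
  set s : ℤ_[p] := ∑ i ∈ Finset.range p, x ^ i * u ^ (p - 1 - i) with hs
  have hfac : x ^ p - u ^ p = s * (x - u) := (geom_sum₂_mul x u p).symm
  have hdvd : (p : ℤ_[p]) ∣ x - u := (PadicInt.norm_lt_one_iff_dvd _).mp hxu
  have hsd : (p : ℤ_[p]) ∣ s := by
    have h1 : (p : ℤ_[p]) ∣ s - ∑ i ∈ Finset.range p, u ^ i * u ^ (p - 1 - i) := by
      rw [hs, ← Finset.sum_sub_distrib]
      apply Finset.dvd_sum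
      intro i hi
      have : (p : ℤ_[p]) ∣ x ^ i - u ^ i :=
        dvd_trans hdvd (sub_dvd_pow_sub_pow x u i)
      have := Dvd.dvd.mul_right this (u ^ (p - 1 - i))
      simpa [sub_mul] using this
    have h2 : ∑ i ∈ Finset.range p, u ^ i * u ^ (p - 1 - i) = (p : ℤ_[p]) := by
      have : ∀ i ∈ Finset.range p, u ^ i * u ^ (p - 1 - i) = 1 := by
        intro i hi
        rw [← pow_add]
        have : i + (p - 1 - i) = p - 1 := by
          have := Finset.mem_range.mp hi
          omega
        rw [this, hu]
      rw [Finset.sum_congr rfl this]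
      simp
    rw [h2] at h1
    have := dvd_add h1 (dvd_refl (p : ℤ_[p]))
    simpa using this
  have hslt : ‖s‖ < 1 := (PadicInt.norm_lt_one_iff_dvd _).mpr hsd
  have hlt : ‖x ^ p - u ^ p‖ < ‖x - u‖ := by
    rw [hfac, norm_mul]
    calc ‖s‖ * ‖x - u‖ < 1 * ‖x - u‖ := by
          apply mul_lt_mul_of_pos_right hslt
          exact lt_of_le_of_ne (norm_nonneg _) (Ne.symm hne)
      _ = ‖x - u‖ := one_mul _
  have key : x ^ p - x = (x ^ p - u ^ p) + (-(x - u)) := by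
    rw [hup]; ring
  rw [key, PadicInt.norm_add_eq_max_of_ne, norm_neg]
  · exact max_eq_right hlt.le
  · rw [norm_neg]; exact ne_of_lt hlt
end

section
/- Let p be a prime with p ≡ 1 or 4 (mod 5) (so p ∉ {2, 5}). Let φ ∈ ℤ_p satisfy φ² = φ + 1, and let u ∈ ℤ_p satisfy u^{p−1} = 1 and ‖φ − u‖_p < 1. Then ‖L(p−1) − 2‖_p = ‖φ − u‖_p², i.e., the p-adic norm of L(p−ε) − 2ε equals the square of ‖φ/ω(φ) − 1‖_p. -/
section CommRing

variable {R : Type*} [CommRing R] {φ : R}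

theorem lucas_cast_eq_pow_add_pow (hφ : φ ^ 2 = φ + 1) :
    ∀ n, (lucas n : R) = φ ^ n + (1 - φ) ^ n
  | 0 => by norm_num [lucas]
  | 1 => by simp [lucas]
  | n + 2 => by
    rw [lucas, Nat.cast_add, lucas_cast_eq_pow_add_pow hφ (n + 1), lucas_cast_eq_pow_add_pow hφ n]
    linear_combination -(φ ^ n + (1 - φ) ^ n) * hφ

theorem pow_mul_lucas_sub_two_eq_sq (hφ : φ ^ 2 = φ + 1) {n : ℕ} (hn : Even n) :
    φ ^ n * ((lucas n : R) - 2) = (φ ^ n - 1) ^ 2 := by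
  have hconj : φ ^ n * (1 - φ) ^ n = 1 := by
    rw [← mul_pow, show φ * (1 - φ) = -1 by linear_combination -hφ, hn.neg_one_pow]
  rw [lucas_cast_eq_pow_add_pow hφ]
  linear_combination hconj

end CommRing

namespace PadicInt

variable {p : ℕ} [Fact p.Prime]

theorem norm_eq_one_of_sq_eq_self_add_one {φ : ℤ_[p]} (hφ : φ ^ 2 = φ + 1) : ‖φ‖ = 1 :=
  isUnit_iff.mp (.of_mul_eq_one (φ - 1) (by linear_combination hφ))

theorem norm_lucas_sub_two_eq_sq_norm_pow_sub_one {φ : ℤ_[p]} (hφ : φ ^ 2 = φ + 1) {n : ℕ} (hn : Even n) :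
    ‖(lucas n : ℤ_[p]) - 2‖ = ‖φ ^ n - 1‖ ^ 2 := by
  have h := congrArg norm (pow_mul_lucas_sub_two_eq_sq hφ hn)
  rwa [norm_mul, norm_pow, norm_pow, norm_eq_one_of_sq_eq_self_add_one hφ, one_pow, one_mul] at h

theorem norm_pow_sub_pow_of_not_dvd {x y : ℤ_[p]} (hxy : ‖x - y‖ < 1) (hx : ‖x‖ = 1) {n : ℕ}
    (hn : ¬p ∣ n) : ‖x ^ n - y ^ n‖ = ‖x - y‖ := by
  have hsum : ‖∑ i ∈ Finset.range n, x ^ i * y ^ (n - 1 - i)‖ = 1 := by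
    refine le_antisymm (norm_le_one _) (not_lt.mp ?_)
    rw [norm_lt_one_iff_dvd]
    refine not_dvd_geom_sum₂ prime_p ((norm_lt_one_iff_dvd _).mp hxy) ?_ ?_
    · rw [← norm_lt_one_iff_dvd, hx]
      exact lt_irrefl 1
    · rwa [← norm_lt_one_iff_dvd, norm_natCast_lt_one_iff]
  rw [← geom_sum₂_mul, norm_mul, hsum, one_mul]

end PadicInt

theorem norm_lucas_sub_two_eq_sq_norm_sub_teichmuller (p : ℕ) [Fact p.Prime]
    (hp5 : p % 5 = 1 ∨ p % 5 = 4)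
    (φ u : ℤ_[p]) (hφ : φ ^ 2 = φ + 1)
    (hu : u ^ (p - 1) = 1) (hu2 : ‖φ - u‖ < 1) :
    ‖(lucas (p - 1) : ℤ_[p]) - 2‖ = ‖φ - u‖ ^ 2 := by
  have hp := (Fact.out : p.Prime)
  have hodd : Odd p := hp.odd_of_ne_two (by rintro rfl; omega)
  have heven : Even (p - 1) := Nat.Odd.sub_odd hodd odd_one
  have hndvd : ¬p ∣ p - 1 :=
    Nat.not_dvd_of_pos_of_lt (Nat.sub_pos_of_lt hp.one_lt) (Nat.sub_lt hp.pos one_pos)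
  rw [PadicInt.norm_lucas_sub_two_eq_sq_norm_pow_sub_one hφ heven, ← hu,
    PadicInt.norm_pow_sub_pow_of_not_dvd hu2 (PadicInt.norm_eq_one_of_sq_eq_self_add_one hφ) hndvd]
end

section
/- Let p be a prime with p ≠ 2 and p ≠ 5. Then ν_p(F(α(p))) = ν_p(F(p−ε)). -/
/-- The natural number `p - ε` for `p ∉ {2, 5}`. -/
def pSubEps (p : ℕ) : ℕ := if p % 5 = 1 ∨ p % 5 = 4 then p - 1 else p + 1

/-!
With `Q = !![1, 1; 1, 0]` one has `Q ^ n = !![F(n + 1), F(n); F(n), F(n - 1)]`, and `D = 2Q - 1`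
satisfies `D ^ 2 = 5`. Over `ZMod p`, Frobenius and Euler's criterion give
`2 Q ^ p - 1 = D ^ p = (5 / p) D`, whose diagonal entries say `2 F(p ∓ 1) = 1 ∓ (5 / p)`; by
quadratic reciprocity `(5 / p) = ε`. Hence `p ∣ F(p - ε)`, so `α(p) ∣ p - ε`. Writing
`p - ε = k α` with `p ∤ k`, one has `F(k α) = F(α) q` with `q ≡ k F(α - 1) ^ (k - 1) (mod F(α))`;
since `F(α - 1)` is coprime to `F(α)`, which `p` divides, `p ∤ q`.
-/

open Nat Matrix

def fibMatrix (R : Type*) [Semiring R] : Matrix (Fin 2) (Fin 2) R := !![1, 1; 1, 0]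

theorem fibMatrix_pow {R : Type*} [Semiring R] {n : ℕ} (hn : n ≠ 0) :
    fibMatrix R ^ n = !![(fib (n + 1) : R), fib n; fib n, fib (n - 1)] := by
  induction n with
  | zero => exact absurd rfl hn
  | succ n ih =>
    rcases eq_or_ne n 0 with rfl | hn'
    · simp [fibMatrix]
    obtain ⟨m, rfl⟩ := exists_eq_succ_of_ne_zero hn'
    rw [pow_succ, ih hn', fibMatrix, mul_fin_two]
    simp only [fib_add_two, succ_eq_add_one, add_tsub_cancel_right, Nat.cast_add, mul_one,
      mul_zero, add_zero]
    congr 3 <;> abel_nf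

section Prime

variable {p : ℕ} [Fact p.Prime]

theorem two_smul_fibMatrix_pow_prime_sub_one (hp2 : p ≠ 2) :
    (2 : ZMod p) • fibMatrix (ZMod p) ^ p - 1 =
      (legendreSym p 5 : ZMod p) • ((2 : ZMod p) • fibMatrix (ZMod p) - 1) := by
  set D := (2 : ZMod p) • fibMatrix (ZMod p) - 1
  have hD : D ^ 2 = (5 : ZMod p) • 1 := by
    have : D = !![1, 2; 2, -1] := by
      ext i j; fin_cases i <;> fin_cases j <;> norm_num [D, fibMatrix]
    rw [this, sq, mul_fin_two]
    ext i j; fin_cases i <;> fin_cases j <;> norm_num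
  have hp : p = 2 * (p / 2) + 1 := by
    have := Nat.odd_iff.mp ((Fact.out : p.Prime).odd_of_ne_two hp2)
    omega
  calc (2 : ZMod p) • fibMatrix (ZMod p) ^ p - 1 = D ^ p := by
        rw [sub_pow_char_of_commute _ (Commute.one_right _), smul_pow, ZMod.pow_card, one_pow]
    _ = (D ^ 2) ^ (p / 2) * D := by rw [← pow_mul, ← pow_succ, ← hp]
    _ = (legendreSym p 5 : ZMod p) • D := by
        rw [hD, smul_pow, one_pow, legendreSym.eq_pow, smul_one_mul]
        simp

theorem two_mul_fib_prime_sub_one (hp2 : p ≠ 2) :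
    2 * (fib (p - 1) : ZMod p) = 1 - legendreSym p 5 := by
  have h := congrFun (congrFun (two_smul_fibMatrix_pow_prime_sub_one hp2) 1) 1
  rw [fibMatrix_pow (Fact.out : p.Prime).ne_zero, fibMatrix] at h
  have h' : 2 * (fib (p - 1) : ZMod p) - 1 = legendreSym p 5 * (2 * 0 - 1) := by simpa using h
  linear_combination h'

theorem two_mul_fib_prime_add_one (hp2 : p ≠ 2) :
    2 * (fib (p + 1) : ZMod p) = 1 + legendreSym p 5 := by
  have h := congrFun (congrFun (two_smul_fibMatrix_pow_prime_sub_one hp2) 0) 0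
  rw [fibMatrix_pow (Fact.out : p.Prime).ne_zero, fibMatrix] at h
  have h' : 2 * (fib (p + 1) : ZMod p) - 1 = legendreSym p 5 * (2 * 1 - 1) := by simpa using h
  linear_combination h'

theorem legendreSym_five (hp2 : p ≠ 2) (hp5 : p ≠ 5) :
    legendreSym p 5 = if p % 5 = 1 ∨ p % 5 = 4 then 1 else -1 := by
  have := Fact.mk prime_five
  have hqr := legendreSym.quadratic_reciprocity_one_mod_four (p := 5) (by norm_num) hp2
  push_cast at hqr
  rw [hqr, legendreSym.mod]
  have h0 : p % 5 ≠ 0 := fun h =>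
    hp5 ((Nat.prime_dvd_prime_iff_eq prime_five Fact.out).mp (Nat.dvd_of_mod_eq_zero h)).symm
  have h5 : ((p : ℤ) % (5 : ℕ)) = ((p % 5 : ℕ) : ℤ) := by push_cast; rfl
  rw [h5]
  rcases (by omega : p % 5 = 1 ∨ p % 5 = 2 ∨ p % 5 = 3 ∨ p % 5 = 4) with h | h | h | h <;>
    rw [h] <;> norm_num

end Prime

theorem prime_dvd_fib_pSubEps {p : ℕ} (hp : p.Prime) (hp2 : p ≠ 2) (hp5 : p ≠ 5) :
    p ∣ fib (pSubEps p) := by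
  have := Fact.mk hp
  have h2 : (2 : ZMod p) ≠ 0 := Ring.two_ne_zero (by rwa [ZMod.ringChar_zmod_n])
  rw [← ZMod.natCast_eq_zero_iff, ← mul_right_inj' h2, mul_zero]
  unfold pSubEps
  split_ifs with h
  · rw [two_mul_fib_prime_sub_one hp2, legendreSym_five hp2 hp5, if_pos h]
    simp
  · rw [two_mul_fib_prime_add_one hp2, legendreSym_five hp2 hp5, if_neg h]
    simp

theorem not_dvd_pSubEps {p : ℕ} (hp : p.Prime) : ¬p ∣ pSubEps p := by
  have := hp.two_le
  unfold pSubEps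
  split_ifs
  · exact Nat.not_dvd_of_pos_of_lt (by omega) (by omega)
  · rw [Nat.dvd_add_right (dvd_refl p)]
    exact hp.not_dvd_one

theorem dvd_fib_fibEntry (p : ℕ) : p ∣ fib (fibEntry p) := by
  rcases Set.eq_empty_or_nonempty {m | 1 ≤ m ∧ p ∣ fib m} with h | h
  · simp [fibEntry, h]
  · exact (Nat.sInf_mem h).2

theorem fibEntry_dvd {p n : ℕ} (h : p ∣ fib n) : fibEntry p ∣ n := by
  rcases eq_or_ne n 0 with rfl | hn
  · exact dvd_zero _
  have hpos : 1 ≤ fibEntry p := (Nat.sInf_mem (s := {m | 1 ≤ m ∧ p ∣ fib m}) ⟨n, by omega, h⟩).1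
  have hle : fibEntry p ≤ Nat.gcd (fibEntry p) n := Nat.sInf_le
    ⟨Nat.gcd_pos_of_pos_right _ (by omega), fib_gcd _ _ ▸ Nat.dvd_gcd (dvd_fib_fibEntry p) h⟩
  exact Nat.gcd_eq_left_iff_dvd.mp
    (Nat.le_antisymm (Nat.le_of_dvd (by omega) (Nat.gcd_dvd_left _ _)) hle)

theorem fib_mul_add_one_modEq (m k : ℕ) :
    fib (k * (m + 1) + 1) ≡ fib m ^ k [MOD fib (m + 1)] := by
  induction k with
  | zero => simp [Nat.ModEq.refl]
  | succ k ih =>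
    have h := fib_add (k * (m + 1)) (m + 1)
    rw [show k * (m + 1) + (m + 1) + 1 = (k + 1) * (m + 1) + 1 by ring] at h
    have hm : fib (m + 2) ≡ fib m [MOD fib (m + 1)] := by
      rw [fib_add_two]
      exact Nat.add_modEq_right
    calc fib ((k + 1) * (m + 1) + 1)
        = fib (k * (m + 1)) * fib (m + 1) + fib (k * (m + 1) + 1) * fib (m + 2) := h
      _ ≡ 0 + fib m ^ k * fib m [MOD fib (m + 1)] :=
        (Nat.modEq_zero_iff_dvd.mpr (dvd_mul_left _ _)).add (ih.mul hm)
      _ = fib m ^ (k + 1) := by ring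

theorem exists_fib_mul_eq_mul_modEq (m k : ℕ) :
    ∃ q, fib ((k + 1) * (m + 1)) = fib (m + 1) * q ∧
      q ≡ (k + 1) * fib m ^ k [MOD fib (m + 1)] := by
  induction k with
  | zero => exact ⟨1, by simp, by simp [Nat.ModEq.refl]⟩
  | succ k ih =>
    obtain ⟨q, hq, hqmod⟩ := ih
    refine ⟨q * fib m + fib ((k + 1) * (m + 1) + 1), ?_, ?_⟩
    · have h := fib_add ((k + 1) * (m + 1)) m
      rw [show (k + 1) * (m + 1) + m + 1 = (k + 1 + 1) * (m + 1) by ring, hq] at h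
      rw [h]
      ring
    · calc q * fib m + fib ((k + 1) * (m + 1) + 1)
          ≡ (k + 1) * fib m ^ k * fib m + fib m ^ (k + 1) [MOD fib (m + 1)] :=
            (hqmod.mul_right _).add (fib_mul_add_one_modEq m (k + 1))
        _ = (k + 1 + 1) * fib m ^ (k + 1) := by ring

theorem padicValNat_fib_mul {p n k : ℕ} (hp : p.Prime) (hpn : p ∣ fib n) (hpk : ¬p ∣ k) :
    padicValNat p (fib (k * n)) = padicValNat p (fib n) := by
  have := Fact.mk hp
  rcases n with _ | m
  · simp
  obtain ⟨k, rfl⟩ : ∃ k', k = k' + 1 :=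
    exists_eq_succ_of_ne_zero fun hk => hpk (hk ▸ dvd_zero p)
  obtain ⟨q, hq, hqmod⟩ := exists_fib_mul_eq_mul_modEq m k
  have hpm : ¬p ∣ fib m := fun h =>
    hp.not_dvd_one ((fib_coprime_fib_succ m).gcd_eq_one ▸ Nat.dvd_gcd h hpn)
  have hpq : ¬p ∣ q := by
    rw [hqmod.dvd_iff hpn, hp.dvd_mul]
    exact not_or.mpr ⟨hpk, fun h => hpm (hp.dvd_of_dvd_pow h)⟩
  rw [hq, padicValNat.mul (fib_pos.mpr (succ_pos m)).ne' (by rintro rfl; exact hpq (dvd_zero p)),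
    padicValNat.eq_zero_of_not_dvd hpq, add_zero]

theorem padicValNat_fib_entry_eq_wall_exponent
    (p : ℕ) (hp : p.Prime) (hp2 : p ≠ 2) (hp5 : p ≠ 5) :
    padicValNat p (Nat.fib (fibEntry p)) = padicValNat p (Nat.fib (pSubEps p)) := by
  obtain ⟨k, hk⟩ := fibEntry_dvd (prime_dvd_fib_pSubEps hp hp2 hp5)
  have hpk : ¬p ∣ k := fun h => not_dvd_pSubEps hp (hk ▸ dvd_mul_of_dvd_right h _)
  rw [hk, mul_comm, padicValNat_fib_mul hp (dvd_fib_fibEntry p) hpk]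
end

section
/- Let p be a prime and let e ≥ 0 be an integer. The p-adic exponential exp_p(x) = Σ_{m ≥ 0} x^m/m! (which converges for x ∈ ℚ_p with ‖x‖_p < p^{−1/(p−1)}) restricts to a bijection from the set {x ∈ ℚ_p : ‖x‖_p < p^{−e − 1/(p−1)}} onto the set {y ∈ ℚ_p : ‖y − 1‖_p < p^{−e − 1/(p−1)}}, and satisfies exp_p(x₁ + x₂) = exp_p(x₁)·exp_p(x₂) for all x₁, x₂ in this set; thus exp_p is a group isomorphism from the additive group {x : ‖x‖_p < p^{−e − 1/(p−1)}} to the multiplicative group {y : ‖y − 1‖_p < p^{−e − 1/(p−1)}}. -/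
/-- The `p`-adic exponential, given by the usual power series `∑ xᵐ/m!`. -/
noncomputable def padicExp (p : ℕ) [Fact p.Prime] (x : ℚ_[p]) : ℚ_[p] :=
  ∑' m : ℕ, x ^ m / (m.factorial : ℚ_[p])

/-!
Write `ρ = p ^ (-1/(p-1))`. Legendre's formula gives `(p - 1) v_p((n+1)!) ≤ n`, i.e.
`ρ ^ n ≤ ‖(n+1)!‖`, so `‖xⁿ⁺¹/(n+1)!‖ ≤ ‖x‖ (‖x‖/ρ)ⁿ`. Hence for `‖x‖ < ρ` the series lies inside
the disc of convergence of Mathlib's `NormedSpace.exp` (which gives additivity), and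
`‖exp x - 1 - x‖ ≤ ‖x‖²/ρ < ‖x‖`. Writing `exp a - exp b = exp b (exp (a - b) - 1)`, the
ultrametric inequality then turns `exp` into an isometry of the `ρ`-ball:
`‖exp a - exp b‖ = ‖a - b‖`. For surjectivity onto `‖y - 1‖ < R ≤ ρ`, the same estimate shows
that `x ↦ x - (exp x - y)` contracts the closed ball of radius `s = ‖y - 1‖` with constant `s/ρ`,
and its fixed point (Banach) solves `exp x = y`.
-/

open NormedSpace IsUltrametricDist Metric
open scoped Nat

noncomputable def padicExpRadius (p : ℕ) : ℝ := (p : ℝ) ^ (-(1 / ((p : ℝ) - 1)))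

section

variable {p : ℕ} [hp : Fact p.Prime]

lemma padicExpRadius_pos : 0 < padicExpRadius p :=
  Real.rpow_pos_of_pos (by exact_mod_cast hp.out.pos) _

lemma padicExpRadius_lt_one : padicExpRadius p < 1 := by
  have hp1 : (1 : ℝ) < p := by exact_mod_cast hp.out.one_lt
  exact Real.rpow_lt_one_of_one_lt_of_neg hp1 (neg_neg_of_pos (by simpa using hp1))

lemma padicExpRadius_pow_le_norm_factorial (n : ℕ) :
    padicExpRadius p ^ n ≤ ‖((n + 1)! : ℚ_[p])‖ := by
  have hp1 : (1 : ℝ) < p := by exact_mod_cast hp.out.one_lt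
  have hv : ((p : ℝ) - 1) * padicValNat p (n + 1)! ≤ n := by
    have hlt := sub_one_mul_padicValNat_factorial_lt_of_ne_zero p (n := n + 1) (by omega)
    rw [← Nat.cast_pred hp.out.pos]
    exact_mod_cast Nat.le_of_lt_succ hlt
  rw [Padic.norm_eq_zpow_neg_valuation (Nat.cast_ne_zero.2 (Nat.factorial_ne_zero _)),
    Padic.valuation_natCast, ← Real.rpow_intCast, padicExpRadius,
    ← Real.rpow_mul_natCast (by positivity), Real.rpow_le_rpow_left_iff hp1, neg_mul,
    Int.cast_neg, Int.cast_natCast, neg_le_neg_iff, one_div_mul_eq_div, le_div_iff₀ (by linarith)]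
  linarith

lemma norm_pow_succ_div_factorial_le (x : ℚ_[p]) (n : ℕ) :
    ‖x ^ (n + 1) / ((n + 1)! : ℚ_[p])‖ ≤ ‖x‖ * (‖x‖ / padicExpRadius p) ^ n := by
  rw [norm_div, norm_pow, div_pow, ← mul_div_assoc, ← pow_succ']
  exact div_le_div_of_nonneg_left (by positivity) (pow_pos padicExpRadius_pos n)
    (padicExpRadius_pow_le_norm_factorial n)

lemma mem_eball_radius_expSeries {x : ℚ_[p]} (hx : ‖x‖ < padicExpRadius p) :
    x ∈ eball 0 (expSeries ℚ_[p] ℚ_[p]).radius := by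
  have hρ : ENNReal.ofReal (padicExpRadius p) ≤ (expSeries ℚ_[p] ℚ_[p]).radius := by
    refine FormalMultilinearSeries.le_radius_of_bound _ 1 fun n => ?_
    rw [expSeries_eq_ofScalars, FormalMultilinearSeries.ofScalars_norm, norm_inv,
      Real.coe_toNNReal _ padicExpRadius_pos.le]
    cases n with
    | zero => simp
    | succ n =>
      rw [inv_mul_le_one₀ (norm_pos_iff.2 (Nat.cast_ne_zero.2 (Nat.factorial_ne_zero _)))]
      exact (pow_le_pow_of_le_one padicExpRadius_pos.le padicExpRadius_lt_one.le n.le_succ).trans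
        (padicExpRadius_pow_le_norm_factorial n)
  rw [mem_eball_zero_iff, ← ofReal_norm]
  exact ((ENNReal.ofReal_lt_ofReal_iff padicExpRadius_pos).2 hx).trans_le hρ

lemma padicExp_eq_exp : padicExp p = exp := by
  rw [exp_eq_tsum_div]
  rfl

lemma summable_pow_div_factorial {x : ℚ_[p]} (hx : ‖x‖ < padicExpRadius p) :
    Summable fun n : ℕ => x ^ n / (n ! : ℚ_[p]) :=
  expSeries_div_summable_of_mem_ball ℚ_[p] x (mem_eball_radius_expSeries hx)

lemma padicExp_zero : padicExp p 0 = 1 := by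
  rw [padicExp_eq_exp, exp_zero]

lemma padicExp_add {x y : ℚ_[p]} (hx : ‖x‖ < padicExpRadius p) (hy : ‖y‖ < padicExpRadius p) :
    padicExp p (x + y) = padicExp p x * padicExp p y := by
  simp only [padicExp_eq_exp]
  exact exp_add_of_mem_ball (𝕂 := ℚ_[p]) (mem_eball_radius_expSeries hx)
    (mem_eball_radius_expSeries hy)

lemma norm_padicExp_sub_one_sub_le {x : ℚ_[p]} (hx : ‖x‖ < padicExpRadius p) :
    ‖padicExp p x - 1 - x‖ ≤ ‖x‖ * (‖x‖ / padicExpRadius p) := by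
  have hρ : 0 < padicExpRadius p := padicExpRadius_pos
  have hratio : ‖x‖ / padicExpRadius p < 1 := (div_lt_one hρ).2 hx
  have htail : padicExp p x - 1 - x = ∑' n, x ^ (n + 2) / ((n + 2)! : ℚ_[p]) := by
    rw [padicExp, ← (summable_pow_div_factorial hx).sum_add_tsum_nat_add 2]
    norm_num [Finset.sum_range_succ, sub_sub, add_sub_add_comm]
  rw [htail]
  refine norm_tsum_le_of_forall_le_of_nonneg (by positivity) fun n => ?_
  calc ‖x ^ (n + 2) / ((n + 2)! : ℚ_[p])‖ ≤ ‖x‖ * (‖x‖ / padicExpRadius p) ^ (n + 1) :=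
        norm_pow_succ_div_factorial_le x (n + 1)
    _ ≤ ‖x‖ * (‖x‖ / padicExpRadius p) := by
        gcongr
        exact pow_le_of_le_one (by positivity) hratio.le n.succ_ne_zero

lemma norm_padicExp_sub_one {x : ℚ_[p]} (hx : ‖x‖ < padicExpRadius p) :
    ‖padicExp p x - 1‖ = ‖x‖ := by
  rcases eq_or_ne x 0 with rfl | hx0
  · simp [padicExp_zero]
  refine Padic.norm_eq_of_norm_sub_lt_right ((norm_padicExp_sub_one_sub_le hx).trans_lt ?_)
  exact mul_lt_of_lt_one_right (norm_pos_iff.2 hx0) ((div_lt_one padicExpRadius_pos).2 hx)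

lemma norm_padicExp_sub_padicExp_sub_le {a b : ℚ_[p]} (ha : ‖a‖ < padicExpRadius p)
    (hb : ‖b‖ < padicExpRadius p) :
    ‖padicExp p a - padicExp p b - (a - b)‖ ≤ ‖a - b‖ * (max ‖a‖ ‖b‖ / padicExpRadius p) := by
  have hρ : 0 < padicExpRadius p := padicExpRadius_pos
  have hab : ‖a - b‖ ≤ max ‖a‖ ‖b‖ := by simpa [sub_eq_add_neg] using norm_add_le_max a (-b)
  have habρ : ‖a - b‖ < padicExpRadius p := hab.trans_lt (max_lt ha hb)
  have hexp : padicExp p a = padicExp p b * padicExp p (a - b) := by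
    rw [← padicExp_add hb habρ, add_sub_cancel]
  have hsplit : padicExp p a - padicExp p b - (a - b) =
      (padicExp p b - 1) * (padicExp p (a - b) - 1) + (padicExp p (a - b) - 1 - (a - b)) := by
    rw [hexp]
    ring
  rw [hsplit]
  refine (norm_add_le_max _ _).trans (max_le ?_ ?_)
  · rw [norm_mul, norm_padicExp_sub_one hb, norm_padicExp_sub_one habρ, mul_comm]
    gcongr
    exact (le_max_right _ _).trans (le_div_self (by positivity) hρ padicExpRadius_lt_one.le)
  · exact (norm_padicExp_sub_one_sub_le habρ).trans (by gcongr)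

lemma norm_padicExp_sub_padicExp {a b : ℚ_[p]} (ha : ‖a‖ < padicExpRadius p)
    (hb : ‖b‖ < padicExpRadius p) : ‖padicExp p a - padicExp p b‖ = ‖a - b‖ := by
  rcases eq_or_ne a b with rfl | hne
  · simp
  refine Padic.norm_eq_of_norm_sub_lt_right
    ((norm_padicExp_sub_padicExp_sub_le ha hb).trans_lt ?_)
  exact mul_lt_of_lt_one_right (norm_pos_iff.2 (sub_ne_zero.2 hne))
    ((div_lt_one padicExpRadius_pos).2 (max_lt ha hb))

lemma exists_padicExp_eq {y : ℚ_[p]} (hy : ‖y - 1‖ < padicExpRadius p) :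
    ∃ x, ‖x‖ ≤ ‖y - 1‖ ∧ padicExp p x = y := by
  set s := ‖y - 1‖
  have hρ : 0 < padicExpRadius p := padicExpRadius_pos
  set Φ : ℚ_[p] → ℚ_[p] := fun x => x - (padicExp p x - y) with hΦ
  have hmaps : Set.MapsTo Φ (closedBall 0 s) (closedBall 0 s) := by
    intro x hx
    rw [mem_closedBall_zero_iff] at hx ⊢
    have hxρ := hx.trans_lt hy
    have hΦx : Φ x = (y - 1) + -(padicExp p x - 1 - x) := by
      rw [hΦ]
      ring
    rw [hΦx]
    refine (norm_add_le_max _ _).trans (max_le le_rfl ?_)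
    calc ‖-(padicExp p x - 1 - x)‖ ≤ ‖x‖ * (‖x‖ / padicExpRadius p) := by
          rw [norm_neg]
          exact norm_padicExp_sub_one_sub_le hxρ
      _ ≤ ‖x‖ := mul_le_of_le_one_right (norm_nonneg _) ((div_le_one hρ).2 hxρ.le)
      _ ≤ s := hx
  have hcontr : ContractingWith ⟨s / padicExpRadius p, by positivity⟩ (hmaps.restrict Φ _ _) := by
    refine ⟨(div_lt_one hρ).2 hy, LipschitzWith.of_dist_le_mul fun a b => ?_⟩
    have ha := mem_closedBall_zero_iff.1 a.2
    have hb := mem_closedBall_zero_iff.1 b.2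
    rw [Subtype.dist_eq, Subtype.dist_eq, dist_eq_norm, dist_eq_norm]
    calc ‖Φ a - Φ b‖ = ‖padicExp p a - padicExp p b - (a - b)‖ := by
          rw [← norm_neg, hΦ]
          ring_nf
      _ ≤ ‖(a : ℚ_[p]) - b‖ * (max ‖(a : ℚ_[p])‖ ‖(b : ℚ_[p])‖ / padicExpRadius p) :=
          norm_padicExp_sub_padicExp_sub_le (ha.trans_lt hy) (hb.trans_lt hy)
      _ ≤ s / padicExpRadius p * ‖(a : ℚ_[p]) - b‖ := by
          rw [mul_comm]
          gcongr
          exact max_le ha hb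
  obtain ⟨x, hx, hfix, -⟩ := hcontr.exists_fixedPoint' isClosed_closedBall.isComplete hmaps
    (mem_closedBall_self (norm_nonneg _)) (edist_ne_top _ _)
  exact ⟨x, mem_closedBall_zero_iff.1 hx, by simpa [Φ, Function.IsFixedPt, sub_eq_zero] using hfix⟩

theorem padicExp_bijOn {R : ℝ} (hR : R ≤ padicExpRadius p) :
    Set.BijOn (padicExp p) {x | ‖x‖ < R} {y | ‖y - 1‖ < R} := by
  refine ⟨fun x hx => ?_, fun a ha b hb hab => ?_, fun y hy => ?_⟩
  · exact (norm_padicExp_sub_one (hx.trans_le hR)).trans_lt hx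
  · have := norm_padicExp_sub_padicExp (ha.trans_le hR) (hb.trans_le hR)
    rwa [hab, sub_self, norm_zero, eq_comm, norm_eq_zero, sub_eq_zero] at this
  · obtain ⟨x, hx, rfl⟩ := exists_padicExp_eq (hy.trans_le hR)
    exact ⟨x, hx.trans_lt hy, rfl⟩

end

theorem padicExp_isom (p : ℕ) [Fact p.Prime] (e : ℕ) :
    (∀ x : ℚ_[p], ‖x‖ < (p : ℝ) ^ (-(1 / ((p : ℝ) - 1))) →
      Summable fun m : ℕ => x ^ m / (m.factorial : ℚ_[p])) ∧
    Set.BijOn (padicExp p)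
      {x : ℚ_[p] | ‖x‖ < (p : ℝ) ^ (-((e : ℝ) + 1 / ((p : ℝ) - 1)))}
      {y : ℚ_[p] | ‖y - 1‖ < (p : ℝ) ^ (-((e : ℝ) + 1 / ((p : ℝ) - 1)))} ∧
    (∀ x₁ x₂ : ℚ_[p],
      ‖x₁‖ < (p : ℝ) ^ (-((e : ℝ) + 1 / ((p : ℝ) - 1))) →
      ‖x₂‖ < (p : ℝ) ^ (-((e : ℝ) + 1 / ((p : ℝ) - 1))) →
      padicExp p (x₁ + x₂) = padicExp p x₁ * padicExp p x₂) := by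
  have hR : (p : ℝ) ^ (-((e : ℝ) + 1 / ((p : ℝ) - 1))) ≤ padicExpRadius p :=
    Real.rpow_le_rpow_of_exponent_le (by exact_mod_cast (Fact.out : p.Prime).one_le) (by simp)
  exact ⟨fun x hx => summable_pow_div_factorial hx, padicExp_bijOn hR,
    fun x₁ x₂ h₁ h₂ => padicExp_add (h₁.trans_le hR) (h₂.trans_le hR)⟩
end

section
/- Let p ≠ 2 be a prime. The limiting density of residues attained by the squares modulo powers of p equals p/(2(p+1)); that is, the sequence λ ↦ |{n² mod p^λ : n ≥ 0}| / p^λ converges, as λ → ∞, to p/(2(p+1)). -/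
/-!
Split the squares modulo `p ^ l` into units and non-units. The unit group `(ZMod (p ^ l))ˣ` is
cyclic of even order `φ (p ^ l)`, so exactly half of the units are squares. A non-unit square is
`(p m) ^ 2 = p ^ 2 m ^ 2`, and `m ^ 2 ↦ p ^ 2 m ^ 2` matches the squares modulo `p ^ l` with the
non-unit squares modulo `p ^ (l + 2)`. Writing `S l` for the number of squares modulo `p ^ l`, this
gives `2 S (l + 2) = φ (p ^ (l + 2)) + 2 S l`, which together with `S 0 = 1` and `2 S 1 = p + 1`
solves to `2 (p + 1) S l = p ^ (l + 1) + O(p)`.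
-/

open Set Filter

theorem Nat.card_range_eq_of_eq_iff_eq {α β γ : Type*} {f : α → β} {g : α → γ}
    (h : ∀ a b, f a = f b ↔ g a = g b) : Nat.card (range f) = Nat.card (range g) :=
  Nat.card_congr <| (Setoid.quotientKerEquivRange f).symm.trans <|
    (Quotient.congrRight h).trans (Setoid.quotientKerEquivRange g)

theorem Units.isSquare_val_iff {M : Type*} [CommMonoid M] (u : Mˣ) :
    IsSquare (u : M) ↔ IsSquare u := by
  refine ⟨fun ⟨r, hr⟩ => ?_, fun h => h.map (Units.coeHom M)⟩
  have hr' : IsUnit r := isUnit_mul_self_iff.mp (hr ▸ u.isUnit)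
  exact ⟨hr'.unit, Units.ext hr⟩

theorem setOf_isSquare_and_isUnit_eq_image {M : Type*} [CommMonoid M] :
    {x : M | IsSquare x ∧ IsUnit x} = Units.val '' {u : Mˣ | IsSquare u} := by
  ext x
  constructor
  · rintro ⟨hsq, hu⟩
    exact ⟨hu.unit, (Units.isSquare_val_iff _).mp hsq, rfl⟩
  · rintro ⟨u, hu, rfl⟩
    exact ⟨(Units.isSquare_val_iff u).mpr hu, u.isUnit⟩

namespace ZMod

theorem range_natCast_sq {n : ℕ} [NeZero n] :
    range (fun m : ℕ => ((m ^ 2 : ℕ) : ZMod n)) = {x | IsSquare x} := by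
  ext x
  simp only [mem_range, mem_ofPred_eq, isSquare_iff_exists_sq, Nat.cast_pow]
  constructor
  · rintro ⟨m, rfl⟩
    exact ⟨m, rfl⟩
  · rintro ⟨r, rfl⟩
    obtain ⟨m, rfl⟩ := natCast_zmod_surjective r
    exact ⟨m, rfl⟩

theorem ncard_isSquare_eq_add (n : ℕ) [NeZero n] :
    {x : ZMod n | IsSquare x}.ncard =
      {x : ZMod n | IsSquare x ∧ IsUnit x}.ncard + {x : ZMod n | IsSquare x ∧ ¬IsUnit x}.ncard :=
  (ncard_inter_add_ncard_sdiff_eq_ncard {x : ZMod n | IsSquare x} {x | IsUnit x}).symm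

theorem two_mul_ncard_isSquare_isUnit {n : ℕ} [IsCyclic (ZMod n)ˣ] (hn : 2 < n) :
    2 * {x : ZMod n | IsSquare x ∧ IsUnit x}.ncard = n.totient := by
  have : NeZero n := ⟨by omega⟩
  have htwo : 2 ∣ n.totient := (Nat.totient_even hn).two_dvd
  have hsq : {u : (ZMod n)ˣ | IsSquare u} = (powMonoidHom 2 : (ZMod n)ˣ →* (ZMod n)ˣ).range := by
    ext u
    simp [isSquare_iff_exists_sq, eq_comm]
  rw [setOf_isSquare_and_isUnit_eq_image, ncard_image_of_injective _ Units.val_injective, hsq,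
    ← Nat.card_coe_set_eq, SetLike.coe_sort_coe, IsCyclic.card_powMonoidHom_range,
    Nat.card_eq_fintype_card, card_units_eq_totient, Nat.gcd_eq_right htwo,
    Nat.mul_div_cancel' htwo]

theorem setOf_isSquare_not_isUnit_prime_pow {p k : ℕ} (hp : p.Prime) (hk : 0 < k) :
    {x : ZMod (p ^ k) | IsSquare x ∧ ¬IsUnit x} =
      range (fun m : ℕ => (((p * m) ^ 2 : ℕ) : ZMod (p ^ k))) := by
  have : NeZero p := ⟨hp.ne_zero⟩
  ext x
  constructor
  · rintro ⟨hsq, hu⟩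
    obtain ⟨m, rfl⟩ : x ∈ range (fun m : ℕ => ((m ^ 2 : ℕ) : ZMod (p ^ k))) := by
      rwa [range_natCast_sq]
    have hpm : p ∣ m := by
      by_contra hpm
      exact hu ((isUnit_natCast_iff_not_dvd_pow hp hk).mpr fun h => hpm (hp.dvd_of_dvd_pow h))
    obtain ⟨m, rfl⟩ := hpm
    exact ⟨m, rfl⟩
  · rintro ⟨m, rfl⟩
    refine ⟨(range_natCast_sq (n := p ^ k)).subset ⟨p * m, rfl⟩, ?_⟩
    rw [isUnit_natCast_iff_not_dvd_pow hp hk, not_not]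
    exact Dvd.dvd.pow (dvd_mul_right p m) two_ne_zero

theorem ncard_isSquare_not_isUnit_prime {p : ℕ} (hp : p.Prime) :
    {x : ZMod (p ^ 1) | IsSquare x ∧ ¬IsUnit x}.ncard = 1 := by
  have hzero : (fun m : ℕ => (((p * m) ^ 2 : ℕ) : ZMod (p ^ 1))) = fun _ => 0 := by
    funext m
    rw [natCast_eq_zero_iff, pow_one, mul_pow]
    exact dvd_mul_of_dvd_left (dvd_pow_self p two_ne_zero) _
  rw [setOf_isSquare_not_isUnit_prime_pow hp one_pos, hzero, range_const, ncard_singleton]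

theorem ncard_isSquare_not_isUnit_prime_pow_add_two {p : ℕ} (hp : p.Prime) (l : ℕ) :
    {x : ZMod (p ^ (l + 2)) | IsSquare x ∧ ¬IsUnit x}.ncard =
      {x : ZMod (p ^ l) | IsSquare x}.ncard := by
  have : NeZero p := ⟨hp.ne_zero⟩
  rw [setOf_isSquare_not_isUnit_prime_pow hp (by omega), ← range_natCast_sq,
    ← Nat.card_coe_set_eq, ← Nat.card_coe_set_eq]
  refine Nat.card_range_eq_of_eq_iff_eq fun a b => ?_
  rw [natCast_eq_natCast_iff, natCast_eq_natCast_iff, mul_pow, mul_pow, pow_add, mul_comm (p ^ l),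
    Nat.ModEq.mul_left_cancel_iff' (pow_ne_zero 2 hp.ne_zero)]

theorem two_mul_ncard_isSquare_isUnit_prime_pow_succ {p : ℕ} (hp : p.Prime) (hp2 : p ≠ 2)
    (k : ℕ) :
    2 * {x : ZMod (p ^ (k + 1)) | IsSquare x ∧ IsUnit x}.ncard = p ^ k * (p - 1) := by
  have := isCyclic_units_of_prime_pow p hp hp2 (k + 1)
  have hp3 : 3 ≤ p := lt_of_le_of_ne hp.two_le hp2.symm
  have hpk : p ≤ p ^ (k + 1) := Nat.le_self_pow k.succ_ne_zero p
  rw [two_mul_ncard_isSquare_isUnit (by omega), Nat.totient_prime_pow_succ hp]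

theorem two_mul_ncard_isSquare_prime {p : ℕ} (hp : p.Prime) (hp2 : p ≠ 2) :
    2 * {x : ZMod (p ^ 1) | IsSquare x}.ncard = p + 1 := by
  have : NeZero p := ⟨hp.ne_zero⟩
  have hunits := two_mul_ncard_isSquare_isUnit_prime_pow_succ hp hp2 0
  rw [pow_zero, one_mul] at hunits
  rw [ncard_isSquare_eq_add, ncard_isSquare_not_isUnit_prime hp, mul_add, hunits]
  have := hp.one_le
  omega

theorem two_mul_ncard_isSquare_prime_pow_add_two {p : ℕ} (hp : p.Prime) (hp2 : p ≠ 2) (l : ℕ) :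
    2 * {x : ZMod (p ^ (l + 2)) | IsSquare x}.ncard =
      p ^ (l + 1) * (p - 1) + 2 * {x : ZMod (p ^ l) | IsSquare x}.ncard := by
  have : NeZero p := ⟨hp.ne_zero⟩
  rw [ncard_isSquare_eq_add, ncard_isSquare_not_isUnit_prime_pow_add_two hp, mul_add,
    two_mul_ncard_isSquare_isUnit_prime_pow_succ hp hp2]

theorem two_mul_succ_mul_ncard_isSquare_prime_pow {p : ℕ} (hp : p.Prime) (hp2 : p ≠ 2) (l : ℕ) :
    2 * (p + 1) * {x : ZMod (p ^ l) | IsSquare x}.ncard =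
      p ^ (l + 1) + if Even l then p + 2 else 2 * p + 1 := by
  obtain ⟨q, rfl⟩ : ∃ q, p = q + 1 := ⟨p - 1, (Nat.sub_add_cancel hp.one_le).symm⟩
  induction l using Nat.twoStepInduction with
  | zero =>
    have : {x : ZMod 1 | IsSquare x}.ncard = 1 :=
      ncard_eq_one.mpr ⟨0, (subsingleton_of_subsingleton).eq_singleton_of_mem IsSquare.zero⟩
    change 2 * (q + 1 + 1) * {x : ZMod 1 | IsSquare x}.ncard = _
    rw [this, if_pos (by decide)]
    ring
  | one =>
    rw [mul_right_comm, two_mul_ncard_isSquare_prime hp hp2, if_neg (by decide)]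
    ring
  | more l ih _ =>
    have h := two_mul_ncard_isSquare_prime_pow_add_two hp hp2 l
    rw [Nat.add_sub_cancel] at h
    simp only [Nat.even_add, even_two, iff_true]
    linear_combination (q + 2) * h + ih

end ZMod

theorem limiting_density_squares_mod_prime_powers (p : ℕ) (hp : p.Prime) (hp2 : p ≠ 2) :
    Filter.Tendsto
      (fun lam : ℕ =>
        (Nat.card (Set.range fun n : ℕ => ((n ^ 2 : ℕ) : ZMod (p ^ lam))) : ℝ) / (p : ℝ) ^ lam)
      Filter.atTop (nhds ((p : ℝ) / (2 * ((p : ℝ) + 1)))) := by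
  have : NeZero p := ⟨hp.ne_zero⟩
  set c : ℕ → ℕ := fun l => if Even l then p + 2 else 2 * p + 1 with hc
  have hdensity (lam : ℕ) :
      p / (2 * (p + 1)) + c lam / (2 * (p + 1)) * ((p : ℝ) ^ lam)⁻¹ =
        (Nat.card (range fun n : ℕ => ((n ^ 2 : ℕ) : ZMod (p ^ lam))) : ℝ) / (p : ℝ) ^ lam := by
    have h : (2 * (p + 1) * {x : ZMod (p ^ lam) | IsSquare x}.ncard : ℝ) =
        p ^ (lam + 1) + c lam := by
      exact_mod_cast ZMod.two_mul_succ_mul_ncard_isSquare_prime_pow hp hp2 lam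
    have hp0 : (p : ℝ) ≠ 0 := by exact_mod_cast hp.ne_zero
    rw [ZMod.range_natCast_sq, Nat.card_coe_set_eq]
    field_simp
    linear_combination -h
  have herror :
      Tendsto (fun lam => (c lam : ℝ) / (2 * (p + 1)) * ((p : ℝ) ^ lam)⁻¹) atTop (nhds 0) := by
    refine squeeze_zero (fun _ => by positivity)
      (fun lam => mul_le_of_le_one_left (by positivity) ?_)
      (tendsto_inv_atTop_zero.comp (tendsto_pow_atTop_atTop_of_one_lt ?_))
    · rw [div_le_one (by positivity)]
      exact_mod_cast (show c lam ≤ 2 * (p + 1) by simp only [hc]; split_ifs <;> omega)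
    · exact_mod_cast hp.one_lt
  simpa only [add_zero] using (tendsto_const_nhds.add herror).congr hdensity
end

section
/- For every integer λ ≥ 0 the following hold for the Fibonacci sequence modulo 2^λ: (a) for every integer k ≡ 3 (mod 4) there exists n ≥ 0 with n ≡ 4 (mod 6) and F(n) ≡ k (mod 2^λ); (b) for every integer k ≡ 1 (mod 4) and each r ∈ {1, 2, 5} there exists n ≥ 0 with n ≡ r (mod 6) and F(n) ≡ k (mod 2^λ); (c) for every integer k ≡ 0 (mod 8) there exists n ≥ 0 with n ≡ 0 (mod 6) and F(n) ≡ k (mod 2^λ); (d) for every integer k ≡ 2 (mod 32) there exists n ≥ 0 with n ≡ 3 (mod 6) and F(n) ≡ k (mod 2^λ). -/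
open Nat in
private lemma fib2m (n : ℕ) : (Nat.fib (2*n) : ℤ) = Nat.fib n * (2 * Nat.fib (n+1) - Nat.fib n) := by
  cases n with
  | zero => simp
  | succ m =>
    have h : 2*(m+1) = m + (m+1) + 1 := by ring
    rw [h, Nat.fib_add]
    push_cast [Nat.fib_add_two]
    ring

private lemma fib2m1 (n : ℕ) : (Nat.fib (2*n+1) : ℤ) = Nat.fib (n+1)^2 + Nat.fib n^2 := by
  exact_mod_cast congrArg (Nat.cast : ℕ → ℤ) (Nat.fib_two_mul_add_one n)

private lemma fibAB (s : ℕ) : ∃ x y : ℤ,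
    (Nat.fib (3 * 2^(s+2)) : ℤ) = 16 * 2^s + 64 * (2^s * x) ∧
    (Nat.fib (3 * 2^(s+2) + 1) : ℤ) = 1 + 8 * 2^s + 32 * (2^s * y) := by
  induction s with
  | zero =>
    refine ⟨2, 7, ?_, ?_⟩
    · show (Nat.fib 12 : ℤ) = _
      rw [show Nat.fib 12 = 144 from rfl]; norm_num
    · show (Nat.fib 13 : ℤ) = _
      rw [show Nat.fib 13 = 233 from rfl]; norm_num
  | succ s ih =>
    obtain ⟨x, y, hx, hy⟩ := ih
    refine ⟨x + 8*2^s*(1+4*x)*(y-x), y + 2^s*(4*(1+4*x)^2 + 1 + 8*y + 16*y^2), ?_, ?_⟩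
    · have h1 : 3 * 2^(s+1+2) = 2 * (3 * 2^(s+2)) := by ring
      rw [h1, fib2m, hx, hy]; ring
    · have h1 : 3 * 2^(s+1+2) + 1 = 2 * (3 * 2^(s+2)) + 1 := by ring
      rw [h1, fib2m1, hx, hy]; ring

private lemma fib_shift (s m : ℕ) : ∃ x y : ℤ,
    (Nat.fib (m + 1 + 3*2^(s+2)) : ℤ) =
      Nat.fib (m+1) + 2^s * (Nat.fib m * (16 + 64*x) + Nat.fib (m+1) * (8 + 32*y)) := by
  obtain ⟨x, y, hx, hy⟩ := fibAB s
  refine ⟨x, y, ?_⟩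
  have h2 : m + 1 + 3*2^(s+2) = m + 3*2^(s+2) + 1 := by omega
  rw [h2, Nat.fib_add]
  push_cast
  rw [hx, hy]
  ring

private lemma lift_odd (s m : ℕ) (h : (Nat.fib (m+1) : ℤ) % 2 = 1) :
    ∃ w : ℤ, (Nat.fib (m+1+3*2^(s+2)) : ℤ) = Nat.fib (m+1) + 2^(s+3) * (1 + 2*w) := by
  obtain ⟨x, y, hd⟩ := fib_shift s m
  obtain ⟨c, hc⟩ : ∃ c : ℤ, (Nat.fib (m+1) : ℤ) = 2*c + 1 := ⟨(Nat.fib (m+1) : ℤ)/2, by omega⟩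
  refine ⟨(Nat.fib m : ℤ)*(1+4*x) + c + 2*y + 4*(y*c), ?_⟩
  rw [hd, hc]; ring

private lemma lift_c (s m : ℕ) (h8 : ∃ c : ℤ, (Nat.fib (m+1) : ℤ) = 8*c)
    (hodd : (Nat.fib m : ℤ) % 2 = 1) :
    ∃ w : ℤ, (Nat.fib (m+1+3*2^(s+2)) : ℤ) = Nat.fib (m+1) + 2^(s+4) * (1 + 2*w) := by
  obtain ⟨x, y, hd⟩ := fib_shift s m
  obtain ⟨c, hc⟩ := h8
  obtain ⟨d, hdd⟩ : ∃ d : ℤ, (Nat.fib m : ℤ) = 2*d + 1 := ⟨(Nat.fib m : ℤ)/2, by omega⟩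
  refine ⟨2*x + d + 4*(x*d) + 2*c + 8*(c*y), ?_⟩
  rw [hd, hc, hdd]; ring

private lemma lift_d (s m : ℕ) (h2 : ∃ c : ℤ, (Nat.fib (m+1) : ℤ) = 32*c + 2)
    (h4 : ∃ d : ℤ, (Nat.fib m : ℤ) = 4*d + 1) :
    ∃ w : ℤ, (Nat.fib (m+1+3*2^(s+2)) : ℤ) = Nat.fib (m+1) + 2^(s+5) * (1 + 2*w) := by
  obtain ⟨x, y, hd⟩ := fib_shift s m
  obtain ⟨c, hc⟩ := h2
  obtain ⟨d, hdd⟩ := h4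
  refine ⟨x + d + 4*(d*x) + y + 4*c + 16*(c*y), ?_⟩
  rw [hd, hc, hdd]; ring

private lemma fib_mod4 (k : ℕ) : ∀ r : ℕ, Nat.fib (6*k + r) % 4 = Nat.fib r % 4 := by
  induction k with
  | zero => intro r; simp
  | succ k ih =>
    intro r
    have h : 6*(k+1)+r = (6*k+r) + 5 + 1 := by omega
    rw [h, Nat.fib_add]
    rw [show Nat.fib 5 = 5 from rfl, show Nat.fib 6 = 8 from rfl]
    have := ih r
    omega

private lemma fib_mod4' (n : ℕ) : Nat.fib n % 4 = Nat.fib (n % 6) % 4 := by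
  conv_lhs => rw [← Nat.div_add_mod n 6]
  exact fib_mod4 (n/6) (n%6)

private lemma upgrade {N n T : ℕ} {k : ℤ}
    (hmod : (Nat.fib n : ℤ) ≡ k [ZMOD 2^N])
    (w : ℤ) (hlift : (Nat.fib (n+T) : ℤ) = Nat.fib n + 2^N * (1 + 2*w)) :
    (Nat.fib n : ℤ) ≡ k [ZMOD 2^(N+1)] ∨ (Nat.fib (n+T) : ℤ) ≡ k [ZMOD 2^(N+1)] := by
  obtain ⟨q, hq⟩ := Int.modEq_iff_dvd.mp hmod
  rcases Int.even_or_odd q with ⟨e, he⟩ | ⟨e, he⟩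
  · left
    rw [Int.modEq_iff_dvd]
    exact ⟨e, by linear_combination hq + 2^N * he⟩
  · right
    rw [Int.modEq_iff_dvd]
    refine ⟨e - w, ?_⟩
    rw [hlift]
    linear_combination hq + 2^N * he

private def GoodP (N : ℕ) : Prop :=
  (∀ k : ℤ, k % 4 = 3 →
    ∃ n : ℕ, 1 ≤ n ∧ n % 6 = 4 ∧ (Nat.fib n : ℤ) ≡ k [ZMOD 2^N]) ∧
  (∀ k : ℤ, k % 4 = 1 → ∀ r ∈ ({1, 2, 5} : Set ℕ),
    ∃ n : ℕ, 1 ≤ n ∧ n % 6 = r ∧ (Nat.fib n : ℤ) ≡ k [ZMOD 2^N]) ∧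
  (∀ k : ℤ, k % 8 = 0 →
    ∃ n : ℕ, 1 ≤ n ∧ n % 6 = 0 ∧ (Nat.fib n : ℤ) ≡ k [ZMOD 2^N]) ∧
  (∀ k : ℤ, k % 32 = 2 →
    ∃ n : ℕ, 1 ≤ n ∧ n % 6 = 3 ∧ (Nat.fib n : ℤ) ≡ k [ZMOD 2^N])

private lemma witBase (n : ℕ) (v k : ℤ) (hv : (Nat.fib n : ℤ) = v) (h : k % 32 = v % 32) :
    (Nat.fib n : ℤ) ≡ k [ZMOD 2^5] := by
  show (Nat.fib n : ℤ) % 2^5 = k % 2^5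
  rw [hv, show ((2:ℤ)^5) = 32 from by norm_num]
  omega

private lemma good5 : GoodP 5 := by
  refine ⟨?_, ?_, ?_, ?_⟩
  · intro k hk
    have h32 : k % 32 = 3 ∨ k % 32 = 7 ∨ k % 32 = 11 ∨ k % 32 = 15 ∨ k % 32 = 19 ∨ k % 32 = 23 ∨ k % 32 = 27 ∨ k % 32 = 31 := by omega
    rcases h32 with h|h|h|h|h|h|h|h
    · exact ⟨4, by norm_num, by norm_num, witBase 4 3 k (by norm_num [show Nat.fib 4 = 3 from rfl]) (by omega)⟩
    · exact ⟨34, by norm_num, by norm_num, witBase 34 5702887 k (by norm_num [show Nat.fib 34 = 5702887 from rfl]) (by omega)⟩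
    · exact ⟨40, by norm_num, by norm_num, witBase 40 102334155 k (by norm_num [show Nat.fib 40 = 102334155 from rfl]) (by omega)⟩
    · exact ⟨22, by norm_num, by norm_num, witBase 22 17711 k (by norm_num [show Nat.fib 22 = 17711 from rfl]) (by omega)⟩
    · exact ⟨28, by norm_num, by norm_num, witBase 28 317811 k (by norm_num [show Nat.fib 28 = 317811 from rfl]) (by omega)⟩
    · exact ⟨10, by norm_num, by norm_num, witBase 10 55 k (by norm_num [show Nat.fib 10 = 55 from rfl]) (by omega)⟩
    · exact ⟨16, by norm_num, by norm_num, witBase 16 987 k (by norm_num [show Nat.fib 16 = 987 from rfl]) (by omega)⟩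
    · exact ⟨46, by norm_num, by norm_num, witBase 46 1836311903 k (by norm_num [show Nat.fib 46 = 1836311903 from rfl]) (by omega)⟩
  · intro k hk r hr
    simp only [Set.mem_insert_iff, Set.mem_singleton_iff] at hr
    rcases hr with rfl | rfl | rfl
    ·
      have h32 : k % 32 = 1 ∨ k % 32 = 5 ∨ k % 32 = 9 ∨ k % 32 = 13 ∨ k % 32 = 17 ∨ k % 32 = 21 ∨ k % 32 = 25 ∨ k % 32 = 29 := by omega
      rcases h32 with h|h|h|h|h|h|h|h
      · exact ⟨1, by norm_num, by norm_num, witBase 1 1 k (by norm_num [show Nat.fib 1 = 1 from rfl]) (by omega)⟩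
      · exact ⟨43, by norm_num, by norm_num, witBase 43 433494437 k (by norm_num [show Nat.fib 43 = 433494437 from rfl]) (by omega)⟩
      · exact ⟨13, by norm_num, by norm_num, witBase 13 233 k (by norm_num [show Nat.fib 13 = 233 from rfl]) (by omega)⟩
      · exact ⟨7, by norm_num, by norm_num, witBase 7 13 k (by norm_num [show Nat.fib 7 = 13 from rfl]) (by omega)⟩
      · exact ⟨25, by norm_num, by norm_num, witBase 25 75025 k (by norm_num [show Nat.fib 25 = 75025 from rfl]) (by omega)⟩
      · exact ⟨19, by norm_num, by norm_num, witBase 19 4181 k (by norm_num [show Nat.fib 19 = 4181 from rfl]) (by omega)⟩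
      · exact ⟨37, by norm_num, by norm_num, witBase 37 24157817 k (by norm_num [show Nat.fib 37 = 24157817 from rfl]) (by omega)⟩
      · exact ⟨31, by norm_num, by norm_num, witBase 31 1346269 k (by norm_num [show Nat.fib 31 = 1346269 from rfl]) (by omega)⟩
    ·
      have h32 : k % 32 = 1 ∨ k % 32 = 5 ∨ k % 32 = 9 ∨ k % 32 = 13 ∨ k % 32 = 17 ∨ k % 32 = 21 ∨ k % 32 = 25 ∨ k % 32 = 29 := by omega
      rcases h32 with h|h|h|h|h|h|h|h
      · exact ⟨2, by norm_num, by norm_num, witBase 2 1 k (by norm_num [show Nat.fib 2 = 1 from rfl]) (by omega)⟩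
      · exact ⟨32, by norm_num, by norm_num, witBase 32 2178309 k (by norm_num [show Nat.fib 32 = 2178309 from rfl]) (by omega)⟩
      · exact ⟨38, by norm_num, by norm_num, witBase 38 39088169 k (by norm_num [show Nat.fib 38 = 39088169 from rfl]) (by omega)⟩
      · exact ⟨20, by norm_num, by norm_num, witBase 20 6765 k (by norm_num [show Nat.fib 20 = 6765 from rfl]) (by omega)⟩
      · exact ⟨26, by norm_num, by norm_num, witBase 26 121393 k (by norm_num [show Nat.fib 26 = 121393 from rfl]) (by omega)⟩
      · exact ⟨8, by norm_num, by norm_num, witBase 8 21 k (by norm_num [show Nat.fib 8 = 21 from rfl]) (by omega)⟩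
      · exact ⟨14, by norm_num, by norm_num, witBase 14 377 k (by norm_num [show Nat.fib 14 = 377 from rfl]) (by omega)⟩
      · exact ⟨44, by norm_num, by norm_num, witBase 44 701408733 k (by norm_num [show Nat.fib 44 = 701408733 from rfl]) (by omega)⟩
    ·
      have h32 : k % 32 = 1 ∨ k % 32 = 5 ∨ k % 32 = 9 ∨ k % 32 = 13 ∨ k % 32 = 17 ∨ k % 32 = 21 ∨ k % 32 = 25 ∨ k % 32 = 29 := by omega
      rcases h32 with h|h|h|h|h|h|h|h
      · exact ⟨47, by norm_num, by norm_num, witBase 47 2971215073 k (by norm_num [show Nat.fib 47 = 2971215073 from rfl]) (by omega)⟩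
      · exact ⟨5, by norm_num, by norm_num, witBase 5 5 k (by norm_num [show Nat.fib 5 = 5 from rfl]) (by omega)⟩
      · exact ⟨35, by norm_num, by norm_num, witBase 35 9227465 k (by norm_num [show Nat.fib 35 = 9227465 from rfl]) (by omega)⟩
      · exact ⟨41, by norm_num, by norm_num, witBase 41 165580141 k (by norm_num [show Nat.fib 41 = 165580141 from rfl]) (by omega)⟩
      · exact ⟨23, by norm_num, by norm_num, witBase 23 28657 k (by norm_num [show Nat.fib 23 = 28657 from rfl]) (by omega)⟩
      · exact ⟨29, by norm_num, by norm_num, witBase 29 514229 k (by norm_num [show Nat.fib 29 = 514229 from rfl]) (by omega)⟩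
      · exact ⟨11, by norm_num, by norm_num, witBase 11 89 k (by norm_num [show Nat.fib 11 = 89 from rfl]) (by omega)⟩
      · exact ⟨17, by norm_num, by norm_num, witBase 17 1597 k (by norm_num [show Nat.fib 17 = 1597 from rfl]) (by omega)⟩
  · intro k hk
    have h32 : k % 32 = 0 ∨ k % 32 = 8 ∨ k % 32 = 16 ∨ k % 32 = 24 := by omega
    rcases h32 with h|h|h|h
    · exact ⟨24, by norm_num, by norm_num, witBase 24 46368 k (by norm_num [show Nat.fib 24 = 46368 from rfl]) (by omega)⟩
    · exact ⟨6, by norm_num, by norm_num, witBase 6 8 k (by norm_num [show Nat.fib 6 = 8 from rfl]) (by omega)⟩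
    · exact ⟨12, by norm_num, by norm_num, witBase 12 144 k (by norm_num [show Nat.fib 12 = 144 from rfl]) (by omega)⟩
    · exact ⟨18, by norm_num, by norm_num, witBase 18 2584 k (by norm_num [show Nat.fib 18 = 2584 from rfl]) (by omega)⟩
  · intro k hk
    have h32 : k % 32 = 2 := by omega
    rcases h32 with h
    · exact ⟨3, by norm_num, by norm_num, witBase 3 2 k (by norm_num [show Nat.fib 3 = 2 from rfl]) (by omega)⟩

private lemma step (N : ℕ) (h5 : 5 ≤ N) (ih : GoodP N) : GoodP (N+1) := by
  obtain ⟨ha, hb, hc, hd⟩ := ih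
  have mod6 : ∀ (n : ℕ) (s : ℕ), (n + 3*2^(s+2)) % 6 = n % 6 := by
    intro n s
    rw [show 3*2^(s+2) = 6 * 2^(s+1) from by ring]
    exact Nat.add_mul_mod_self_left n 6 (2^(s+1))
  have oddOf : ∀ m : ℕ, Nat.fib m % 4 = 1 ∨ Nat.fib m % 4 = 3 → (Nat.fib m : ℤ) % 2 = 1 := by
    intro m hm; omega
  refine ⟨?_, ?_, ?_, ?_⟩
  · -- r = 4
    intro k hk
    obtain ⟨n, hn1, hn6, hm⟩ := ha k hk
    obtain ⟨m, rfl⟩ : ∃ m, n = m + 1 := ⟨n - 1, by omega⟩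
    have hodd : (Nat.fib (m+1) : ℤ) % 2 = 1 := by
      refine oddOf _ (Or.inr ?_)
      have h4 := fib_mod4' (m+1)
      rw [hn6] at h4
      exact h4.trans (by rfl)
    obtain ⟨w, hw⟩ := lift_odd (N-3) m hodd
    rw [show N-3+3 = N from by omega] at hw
    rcases upgrade hm w hw with h | h
    · exact ⟨m+1, by omega, hn6, h⟩
    · exact ⟨m+1+3*2^(N-3+2), by omega, by rw [mod6 (m+1) (N-3)]; exact hn6, h⟩
  · -- r ∈ {1, 2, 5}
    intro k hk r hr
    obtain ⟨n, hn1, hn6, hm⟩ := hb k hk r hr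
    simp only [Set.mem_insert_iff, Set.mem_singleton_iff] at hr
    obtain ⟨m, rfl⟩ : ∃ m, n = m + 1 := ⟨n - 1, by omega⟩
    have hodd : (Nat.fib (m+1) : ℤ) % 2 = 1 := by
      refine oddOf _ (Or.inl ?_)
      have h4 := fib_mod4' (m+1)
      rcases hr with rfl | rfl | rfl
      · rw [hn6] at h4; exact h4.trans (by rfl)
      · rw [hn6] at h4; exact h4.trans (by rfl)
      · rw [hn6] at h4; exact h4.trans (by rfl)
    obtain ⟨w, hw⟩ := lift_odd (N-3) m hodd
    rw [show N-3+3 = N from by omega] at hw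
    rcases upgrade hm w hw with h | h
    · exact ⟨m+1, by omega, hn6, h⟩
    · exact ⟨m+1+3*2^(N-3+2), by omega, by rw [mod6 (m+1) (N-3)]; exact hn6, h⟩
  · -- r = 0
    intro k hk
    obtain ⟨n, hn1, hn6, hm⟩ := hc k hk
    obtain ⟨m, rfl⟩ : ∃ m, n = m + 1 := ⟨n - 1, by omega⟩
    have hmodd : (Nat.fib m : ℤ) % 2 = 1 := by
      refine oddOf _ (Or.inl ?_)
      have h4 := fib_mod4' m
      rw [show m % 6 = 5 from by omega] at h4
      exact h4.trans (by rfl)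
    have h8 : ∃ c : ℤ, (Nat.fib (m+1) : ℤ) = 8*c := by
      have hdvd : (8:ℤ) ∣ 2^N := by
        rw [show (8:ℤ) = 2^3 from by norm_num]
        exact pow_dvd_pow 2 (by omega)
      have h8' : (Nat.fib (m+1) : ℤ) % 8 = k % 8 := hm.of_dvd hdvd
      exact ⟨(Nat.fib (m+1) : ℤ)/8, by omega⟩
    obtain ⟨w, hw⟩ := lift_c (N-4) m h8 hmodd
    rw [show N-4+4 = N from by omega] at hw
    rcases upgrade hm w hw with h | h
    · exact ⟨m+1, by omega, hn6, h⟩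
    · exact ⟨m+1+3*2^(N-4+2), by omega, by rw [mod6 (m+1) (N-4)]; exact hn6, h⟩
  · -- r = 3
    intro k hk
    obtain ⟨n, hn1, hn6, hm⟩ := hd k hk
    obtain ⟨m, rfl⟩ : ∃ m, n = m + 1 := ⟨n - 1, by omega⟩
    have h4f : ∃ d : ℤ, (Nat.fib m : ℤ) = 4*d + 1 := by
      have h4 := fib_mod4' m
      rw [show m % 6 = 2 from by omega] at h4
      have h4' : Nat.fib m % 4 = 1 := h4.trans (by rfl)
      exact ⟨(Nat.fib m : ℤ)/4, by omega⟩
    have h2f : ∃ c : ℤ, (Nat.fib (m+1) : ℤ) = 32*c + 2 := by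
      have hdvd : (32:ℤ) ∣ 2^N := by
        rw [show (32:ℤ) = 2^5 from by norm_num]
        exact pow_dvd_pow 2 (by omega)
      have h2' : (Nat.fib (m+1) : ℤ) % 32 = k % 32 := hm.of_dvd hdvd
      exact ⟨((Nat.fib (m+1) : ℤ) - 2)/32, by omega⟩
    obtain ⟨w, hw⟩ := lift_d (N-5) m h2f h4f
    rw [show N-5+5 = N from by omega] at hw
    rcases upgrade hm w hw with h | h
    · exact ⟨m+1, by omega, hn6, h⟩
    · exact ⟨m+1+3*2^(N-5+2), by omega, by rw [mod6 (m+1) (N-5)]; exact hn6, h⟩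

private lemma goodAll (N : ℕ) (h5 : 5 ≤ N) : GoodP N := by
  induction N, h5 using Nat.le_induction with
  | base => exact good5
  | succ N hN ih => exact step N hN ih

theorem fibonacci_two_adic_branch_images :
    ∀ lam : ℕ,
      (∀ k : ℤ, k ≡ 3 [ZMOD 4] →
        ∃ n : ℕ, n % 6 = 4 ∧ ((Nat.fib n : ℤ) : ZMod (2 ^ lam)) = (k : ZMod (2 ^ lam))) ∧
      (∀ k : ℤ, k ≡ 1 [ZMOD 4] → ∀ r ∈ ({1, 2, 5} : Set ℕ),
        ∃ n : ℕ, n % 6 = r ∧ ((Nat.fib n : ℤ) : ZMod (2 ^ lam)) = (k : ZMod (2 ^ lam))) ∧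
      (∀ k : ℤ, k ≡ 0 [ZMOD 8] →
        ∃ n : ℕ, n % 6 = 0 ∧ ((Nat.fib n : ℤ) : ZMod (2 ^ lam)) = (k : ZMod (2 ^ lam))) ∧
      (∀ k : ℤ, k ≡ 2 [ZMOD 32] →
        ∃ n : ℕ, n % 6 = 3 ∧ ((Nat.fib n : ℤ) : ZMod (2 ^ lam)) = (k : ZMod (2 ^ lam))) := by
  intro lam
  obtain ⟨ha, hb, hc, hd⟩ := goodAll (max lam 5) (le_max_right _ _)
  have hdvd : ((2:ℤ)^lam) ∣ 2^(max lam 5) := pow_dvd_pow 2 (le_max_left _ _)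
  have conv : ∀ (n : ℕ) (k : ℤ), (Nat.fib n : ℤ) ≡ k [ZMOD 2^(max lam 5)] →
      ((Nat.fib n : ℤ) : ZMod (2 ^ lam)) = (k : ZMod (2 ^ lam)) := by
    intro n k h
    rw [ZMod.intCast_eq_intCast_iff]
    rw [show (((2^lam : ℕ)) : ℤ) = (2:ℤ)^lam from by push_cast; ring]
    exact h.of_dvd hdvd
  refine ⟨?_, ?_, ?_, ?_⟩
  · intro k hk
    have hk' : k % 4 = 3 % 4 := hk
    obtain ⟨n, _, hn6, hm⟩ := ha k (by omega)
    exact ⟨n, hn6, conv n k hm⟩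
  · intro k hk r hr
    have hk' : k % 4 = 1 % 4 := hk
    obtain ⟨n, _, hn6, hm⟩ := hb k (by omega) r hr
    exact ⟨n, hn6, conv n k hm⟩
  · intro k hk
    have hk' : k % 8 = 0 % 8 := hk
    obtain ⟨n, _, hn6, hm⟩ := hc k (by omega)
    exact ⟨n, hn6, conv n k hm⟩
  · intro k hk
    have hk' : k % 32 = 2 % 32 := hk
    obtain ⟨n, _, hn6, hm⟩ := hd k (by omega)
    exact ⟨n, hn6, conv n k hm⟩
end
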